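/- arXiv:2312.09021 — 9 statements merged into one kernel-verified Lean document; each statement's English description precedes it below -/
import Mathlib

section
/- Let q be a squarefree positive integer and k ≥ 1 an integer. Then Σ_{r_1,...,r_k} (∏_{i=1}^k μ(r_i)²/φ(r_i)) · #{(b_1,...,b_k) : 1 ≤ b_i ≤ r_i, gcd(b_i,r_i) = 1 for all i, and b_1/r_1 + ⋯ + b_k/r_k ∈ ℤ} ≤ ∏_{p|q} (1 + 2^k/(p−1)), where the outer sum is over all k-tuples (r_1,...,r_k) of positive divisors of q, and the product on the right is over primes p dividing q. -/
/-!
Fix divisors `r i` of `q` and let `P` be the set of primes dividing some `r i`. Hand each `p ∈ P`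
to a single index `i` with `p ∣ r i`, and let `m i` be the product of the primes of `r i` not
handed to `i`. If `p` is handed to `i`, reducing `q * ∑ j, b j / r j ∈ q ℤ` modulo `p` determines
`b i mod p` from the `b j mod p` with `j ≠ i` and `p ∣ r j`, and these are read off from
`b j mod m j`. So `b ↦ (b i mod m i)` is injective on the admissible tuples, whose number is
therefore at most `∏ φ (m i) = ∏ φ (r i) / ∏_{p ∈ P} (p - 1)`: each summand is at most
`∏_{p ∈ P} (p - 1)⁻¹`. As a tuple of squarefree divisors is determined by the sets
`{i | p ∣ r i}`, the sum is at most `∏_p (1 + (2 ^ k - 1) / (p - 1))`.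
-/

open scoped Classical

open Finset Function
open scoped Nat ArithmeticFunction.Moebius

noncomputable def integralSumTuples {ι : Type*} [Fintype ι] [DecidableEq ι] (r : ι → ℕ) :
    Finset (ι → ℕ) :=
  (Fintype.piFinset fun i => Finset.Icc 1 (r i)).filter
    (fun b => (∀ i, Nat.gcd (b i) (r i) = 1) ∧ ∃ z : ℤ, ∑ i, (b i : ℚ) / (r i : ℚ) = (z : ℚ))

theorem prime_dvd_of_sum_div_eq_int {ι : Type*} [Fintype ι] [DecidableEq ι] {q : ℕ}
    (hq : Squarefree q) {r : ι → ℕ} (hr : ∀ j, r j ∣ q) {c : ι → ℤ} {z : ℤ}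
    (hc : ∑ j, (c j : ℚ) / r j = z) {p : ℕ} (hp : p.Prime) {i : ι} (hpi : p ∣ r i)
    (hpc : ∀ j ≠ i, p ∣ r j → (p : ℤ) ∣ c j) : (p : ℤ) ∣ c i := by
  choose n hn using hr
  have hpq : p ∣ q := hn i ▸ hpi.mul_right (n i)
  have hcleared : c i * n i + ∑ j ∈ univ.erase i, c j * n j = z * q := by
    have : ∑ j, (c j : ℚ) * n j = z * q := by
      rw [← hc, sum_mul]
      refine sum_congr rfl fun j _ => ?_
      have hrj : (r j : ℚ) ≠ 0 := by
        exact_mod_cast left_ne_zero_of_mul (hn j ▸ hq.ne_zero)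
      rw [hn j, Nat.cast_mul]
      field_simp
    rw [add_sum_erase _ (fun j => c j * n j) (mem_univ i)]
    exact_mod_cast this
  have hrest : (p : ℤ) ∣ ∑ j ∈ univ.erase i, c j * n j := by
    refine dvd_sum fun j hj => ?_
    by_cases hpj : p ∣ r j
    · exact (hpc j (ne_of_mem_erase hj) hpj).mul_right _
    · refine Dvd.dvd.mul_left (Int.natCast_dvd_natCast.mpr ?_) _
      exact (hp.dvd_mul.mp (hn j ▸ hpq)).resolve_left hpj
  have hterm : (p : ℤ) ∣ c i * n i :=
    (dvd_add_left hrest).mp (hcleared ▸ (Int.natCast_dvd_natCast.mpr hpq).mul_left z)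
  refine ((Nat.prime_iff_prime_int.mp hp).dvd_or_dvd hterm).resolve_right fun hpn => ?_
  exact hp.not_isUnit (hq p (hn i ▸ mul_dvd_mul hpi (Int.natCast_dvd_natCast.mp hpn)))

theorem Nat.totient_prod_primes {s : Finset ℕ} (hs : ∀ p ∈ s, p.Prime) :
    φ (∏ p ∈ s, p) = ∏ p ∈ s, (p - 1) := by
  rw [Nat.totient_eq_div_primeFactors_mul, Nat.primeFactors_prod hs,
    Nat.div_self (prod_pos fun p hp => (hs p hp).pos), one_mul]

theorem Nat.totient_eq_prod_mul_totient_prod_sdiff {n : ℕ} (hn : Squarefree n) {s : Finset ℕ}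
    (hs : s ⊆ n.primeFactors) :
    φ n = (∏ p ∈ s, (p - 1)) * φ (∏ p ∈ n.primeFactors \ s, p) := by
  conv_lhs => rw [← Nat.prod_primeFactors_of_squarefree hn]
  rw [Nat.totient_prod_primes fun p => Nat.prime_of_mem_primeFactors,
    Nat.totient_prod_primes fun p hp => Nat.prime_of_mem_primeFactors (mem_sdiff.mp hp).1,
    mul_comm, prod_sdiff hs]

theorem prod_sup_primeFactors_eq_prod_ite {ι M : Type*} [Fintype ι] [CommMonoid M] {q : ℕ}
    (hq : q ≠ 0) {r : ι → ℕ} (hr : ∀ i, r i ∣ q) (g : ℕ → M) :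
    ∏ p ∈ univ.sup (fun i => (r i).primeFactors), g p
      = ∏ p ∈ q.primeFactors, if ({i | p ∣ r i} : Finset ι).Nonempty then g p else 1 := by
  rw [← prod_filter]
  congr 1
  ext p
  simp only [mem_sup, mem_univ, true_and, mem_filter, filter_nonempty_iff, Nat.mem_primeFactors]
  constructor
  · rintro ⟨i, hp, hpi, hri⟩
    exact ⟨⟨hp, hpi.trans (hr i), hq⟩, i, hpi⟩
  · rintro ⟨⟨hp, -, -⟩, i, hpi⟩
    exact ⟨i, hp, hpi, ne_zero_of_dvd_ne_zero hq (hr i)⟩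

section Counting

variable {ι : Type*} [Fintype ι] [DecidableEq ι] {q : ℕ} {r : ι → ℕ} {O : ι → Finset ℕ}

theorem eq_of_modEq_of_mem_integralSumTuples (hq : Squarefree q) (hr : ∀ i, r i ∣ q)
    (hdisj : Pairwise (Disjoint on O)) {b b' : ι → ℕ} (hb : b ∈ integralSumTuples r)
    (hb' : b' ∈ integralSumTuples r)
    (hbb' : ∀ i, b i ≡ b' i [MOD ∏ p ∈ (r i).primeFactors \ O i, p]) : b = b' := by
  simp only [integralSumTuples, mem_filter, Fintype.mem_piFinset, mem_Icc] at hb hb'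
  obtain ⟨hb_mem, -, z, hz⟩ := hb
  obtain ⟨hb'_mem, -, z', hz'⟩ := hb'
  have hc : ∑ j, (((b j : ℤ) - b' j : ℤ) : ℚ) / r j = ((z - z' : ℤ) : ℚ) := by
    push_cast
    rw [← hz, ← hz', ← sum_sub_distrib]
    exact sum_congr rfl fun j _ => sub_div _ _ _
  have hunowned : ∀ j, ∀ p ∈ (r j).primeFactors \ O j, (p : ℤ) ∣ b j - b' j := fun j p hp =>
    (Int.natCast_dvd_natCast.mpr (dvd_prod_of_mem _ hp)).trans (hbb' j).symm.dvd
  have hprime : ∀ i, ∀ p ∈ (r i).primeFactors, (p : ℤ) ∣ b i - b' i := by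
    intro i p hp
    by_cases hpO : p ∈ O i
    · refine prime_dvd_of_sum_div_eq_int hq hr hc (Nat.prime_of_mem_primeFactors hp)
        (Nat.dvd_of_mem_primeFactors hp) fun j hji hpj => hunowned j p (mem_sdiff.mpr ⟨?_, ?_⟩)
      · exact Nat.mem_primeFactors.mpr ⟨Nat.prime_of_mem_primeFactors hp, hpj,
          ne_zero_of_dvd_ne_zero hq.ne_zero (hr j)⟩
      · exact disjoint_left.mp (hdisj hji.symm) hpO
    · exact hunowned i p (mem_sdiff.mpr ⟨hp, hpO⟩)
  funext i
  have hdvd : r i ∣ ((b i : ℤ) - b' i).natAbs := by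
    rw [← Nat.prod_primeFactors_of_squarefree (hq.squarefree_of_dvd (hr i))]
    exact prod_primes_dvd _ (fun p hp => (Nat.prime_of_mem_primeFactors hp).prime)
      fun p hp => Int.natCast_dvd.mp (hprime i p hp)
  have hlt : ((b i : ℤ) - b' i).natAbs < r i := by
    have := hb_mem i
    have := hb'_mem i
    omega
  have := Nat.eq_zero_of_dvd_of_lt hdvd hlt
  omega

theorem card_integralSumTuples_le_prod_totient (hq : Squarefree q) (hr : ∀ i, r i ∣ q)
    (hdisj : Pairwise (Disjoint on O)) :
    #(integralSumTuples r) ≤ ∏ i, φ (∏ p ∈ (r i).primeFactors \ O i, p) := by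
  set m : ι → ℕ := fun i => ∏ p ∈ (r i).primeFactors \ O i, p
  have hm_dvd : ∀ i, m i ∣ r i := fun i =>
    (prod_dvd_prod_of_subset _ _ _ sdiff_subset).trans (Nat.prod_primeFactors_dvd _)
  have hm_pos : ∀ i, 0 < m i := fun i =>
    prod_pos fun p hp => (Nat.prime_of_mem_primeFactors (mem_sdiff.mp hp).1).pos
  simp only [Nat.totient_eq_card_coprime, ← Fintype.card_piFinset]
  refine card_le_card_of_injOn (fun b i => b i % m i) (fun b hb => ?_)
    fun b hb b' hb' h => eq_of_modEq_of_mem_integralSumTuples hq hr hdisj hb hb' (congrFun h)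
  rw [mem_coe, integralSumTuples, mem_filter] at hb
  rw [mem_coe, Fintype.mem_piFinset]
  intro i
  refine mem_filter.mpr ⟨mem_range.mpr (Nat.mod_lt _ (hm_pos i)), ?_⟩
  have : Nat.Coprime (m i) (b i) := (Nat.Coprime.coprime_dvd_right (hm_dvd i) (hb.2.1 i)).symm
  rwa [Nat.Coprime, Nat.gcd_comm, ← Nat.gcd_rec]

theorem card_integralSumTuples_mul_le_prod_totient (hq : Squarefree q) (hr : ∀ i, r i ∣ q)
    (hO : ∀ i, O i ⊆ (r i).primeFactors) (hdisj : Pairwise (Disjoint on O)) :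
    #(integralSumTuples r) * ∏ i, ∏ p ∈ O i, (p - 1) ≤ ∏ i, φ (r i) := by
  rw [prod_congr rfl fun i _ =>
      Nat.totient_eq_prod_mul_totient_prod_sdiff (hq.squarefree_of_dvd (hr i)) (hO i),
    prod_mul_distrib, mul_comm]
  exact Nat.mul_le_mul_left _ (card_integralSumTuples_le_prod_totient hq hr hdisj)

theorem card_integralSumTuples_mul_prod_le_prod_totient (hq : Squarefree q) (hr : ∀ i, r i ∣ q) :
    #(integralSumTuples r) * ∏ p ∈ univ.sup (fun i => (r i).primeFactors), (p - 1)
      ≤ ∏ i, φ (r i) := by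
  obtain ⟨O, hO, hsup, hdisj⟩ := Fintype.exists_disjointed_le fun i => (r i).primeFactors
  rw [← hsup, sup_eq_biUnion, prod_biUnion (hdisj.set_pairwise _)]
  exact card_integralSumTuples_mul_le_prod_totient hq hr hO hdisj

theorem prod_moebius_sq_div_totient_mul_card_le (hq : Squarefree q) (hr : ∀ i, r i ∣ q) :
    (∏ i, ((μ (r i) : ℝ) ^ 2 / φ (r i))) * #(integralSumTuples r)
      ≤ ∏ p ∈ q.primeFactors,
          if ({i | p ∣ r i} : Finset ι).Nonempty then ((p : ℝ) - 1)⁻¹ else 1 := by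
  rw [← prod_sup_primeFactors_eq_prod_ite hq.ne_zero hr]
  set P := univ.sup fun i => (r i).primeFactors
  have hsf : ∀ i, Squarefree (r i) := fun i => hq.squarefree_of_dvd (hr i)
  have hμ : ∀ i, (μ (r i) : ℝ) ^ 2 = 1 := fun i => by
    exact_mod_cast ArithmeticFunction.moebius_sq_eq_one_of_squarefree (hsf i)
  have hφ : 0 < ∏ i, (φ (r i) : ℝ) :=
    prod_pos fun i _ => by exact_mod_cast Nat.totient_pos.mpr (Nat.pos_of_ne_zero (hsf i).ne_zero)
  have hP : ∀ p ∈ P, 2 ≤ p := fun p hp => by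
    obtain ⟨i, -, hpi⟩ := mem_sup.mp hp
    exact (Nat.prime_of_mem_primeFactors hpi).two_le
  have hpos : 0 < ∏ p ∈ P, ((p : ℝ) - 1) := prod_pos fun p hp => by
    have : (2 : ℝ) ≤ p := by exact_mod_cast hP p hp
    linarith
  have hcount := card_integralSumTuples_mul_prod_le_prod_totient hq hr
  rw [← Nat.cast_le (α := ℝ), Nat.cast_mul, Nat.cast_prod, Nat.cast_prod,
    prod_congr rfl fun p hp => Nat.cast_sub (R := ℝ) (one_le_two.trans (hP p hp)),
    Nat.cast_one] at hcount
  simp only [hμ, one_div, prod_inv_distrib]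
  rw [inv_mul_le_iff₀ hφ, ← div_eq_mul_inv, le_div_iff₀ hpos]
  exact hcount

end Counting

theorem sum_piFinset_divisors_prod_le_prod_sum {ι : Type*} [Fintype ι] [DecidableEq ι] {q : ℕ}
    (hq : Squarefree q) (f : ℕ → Finset ι → ℝ) (hf : ∀ p ∈ q.primeFactors, ∀ T, 0 ≤ f p T) :
    ∑ r ∈ Fintype.piFinset (fun _ : ι => q.divisors), ∏ p ∈ q.primeFactors, f p {i | p ∣ r i}
      ≤ ∏ p ∈ q.primeFactors, ∑ T, f p T := by
  set τ : (ι → ℕ) → q.primeFactors → Finset ι := fun r p => {i | (p : ℕ) ∣ r i}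
  have hτ : Set.InjOn τ (Fintype.piFinset fun _ : ι => q.divisors) := by
    intro r hr r' hr' h
    rw [mem_coe, Fintype.mem_piFinset] at hr hr'
    funext i
    have hri := Nat.dvd_of_mem_divisors (hr i)
    have hri' := Nat.dvd_of_mem_divisors (hr' i)
    refine (Nat.Squarefree.ext_iff (hq.squarefree_of_dvd hri) (hq.squarefree_of_dvd hri')).mpr
      fun p hp => ?_
    by_cases hpq : p ∣ q
    · have hpτ := congrArg (i ∈ ·) (congrFun h ⟨p, Nat.mem_primeFactors.mpr ⟨hp, hpq, hq.ne_zero⟩⟩)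
      simpa [τ] using hpτ
    · exact iff_of_false (fun h => hpq (h.trans hri)) (fun h => hpq (h.trans hri'))
  calc ∑ r ∈ Fintype.piFinset (fun _ : ι => q.divisors), ∏ p ∈ q.primeFactors, f p {i | p ∣ r i}
      = ∑ G ∈ (Fintype.piFinset fun _ : ι => q.divisors).image τ,
          ∏ p : q.primeFactors, f p (G p) := by
        rw [sum_image hτ]
        exact sum_congr rfl fun r _ => (prod_coe_sort _ _).symm
    _ ≤ ∑ G : q.primeFactors → Finset ι, ∏ p : q.primeFactors, f p (G p) :=
        sum_le_univ_sum_of_nonneg fun G => prod_nonneg fun p _ => hf p p.2 _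
    _ = ∏ p ∈ q.primeFactors, ∑ T, f p T := by
        rw [← Fintype.prod_sum]
        exact prod_coe_sort _ fun p => ∑ T, f p T

theorem sum_ite_nonempty_le {ι : Type*} [Fintype ι] {x : ℝ} (hx : 0 ≤ x) :
    ∑ T : Finset ι, (if T.Nonempty then x else 1) ≤ 1 + 2 ^ Fintype.card ι * x := by
  calc ∑ T : Finset ι, (if T.Nonempty then x else 1)
      ≤ ∑ T : Finset ι, (x + if T = ∅ then 1 else 0) := by
        refine sum_le_sum fun T _ => ?_
        rcases T.eq_empty_or_nonempty with rfl | hT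
        · simp [hx]
        · simp [hT, hT.ne_empty]
    _ = 1 + 2 ^ Fintype.card ι * x := by
        rw [sum_add_distrib, sum_ite_eq', if_pos (mem_univ _), sum_const, card_univ,
          Fintype.card_finset, nsmul_eq_mul, Nat.cast_pow, Nat.cast_two, add_comm]

theorem bounds_on_r_i_sums_no_Fs_general (q : ℕ) (hq : Squarefree q)
    (k : ℕ) :
    ∑ r ∈ Fintype.piFinset (fun _ : Fin k => q.divisors),
      (∏ i, ((ArithmeticFunction.moebius (r i) : ℝ) ^ 2 / (Nat.totient (r i) : ℝ))) *
        (((Fintype.piFinset fun i => Finset.Icc 1 (r i)).filter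
          (fun b => (∀ i, Nat.gcd (b i) (r i) = 1) ∧
            ∃ z : ℤ, ∑ i, (b i : ℚ) / (r i : ℚ) = (z : ℚ))).card : ℝ)
    ≤ ∏ p ∈ q.primeFactors, (1 + 2 ^ k / ((p : ℝ) - 1)) := by
  -- Over `Fin k` the statement decides `∀ i` by `Nat.decidableForallFin`, not by the instance
  -- inside `integralSumTuples`, so the two filters agree only up to `congr`.
  have hfilter : ∀ r : Fin k → ℕ, ((Fintype.piFinset fun i => Finset.Icc 1 (r i)).filter
      (fun b => (∀ i, Nat.gcd (b i) (r i) = 1) ∧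
        ∃ z : ℤ, ∑ i, (b i : ℚ) / (r i : ℚ) = (z : ℚ))) = integralSumTuples r := fun r => by
    unfold integralSumTuples
    congr
  have hw : ∀ p ∈ q.primeFactors, 0 ≤ ((p : ℝ) - 1)⁻¹ := fun p hp =>
    inv_nonneg.mpr (sub_nonneg.mpr (Nat.one_le_cast.mpr (Nat.prime_of_mem_primeFactors hp).one_le))
  have hf : ∀ p ∈ q.primeFactors, ∀ T : Finset (Fin k),
      0 ≤ if T.Nonempty then ((p : ℝ) - 1)⁻¹ else 1 := fun p hp T => by
    split_ifs
    exacts [hw p hp, zero_le_one]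
  simp only [hfilter]
  refine (sum_le_sum fun r hr => prod_moebius_sq_div_totient_mul_card_le hq fun i =>
      Nat.dvd_of_mem_divisors (Fintype.mem_piFinset.mp hr i)).trans <|
    (sum_piFinset_divisors_prod_le_prod_sum hq
      (fun p T => if T.Nonempty then ((p : ℝ) - 1)⁻¹ else 1) hf).trans <|
    prod_le_prod (fun p hp => sum_nonneg fun T _ => hf p hp T) fun p hp => ?_
  simpa [div_eq_mul_inv] using sum_ite_nonempty_le (ι := Fin k) (hw p hp)

theorem bounds_on_r_i_sums_no_Fs (q : ℕ) (hq : Squarefree q) (hq0 : 0 < q)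
    (k : ℕ) (hk : 1 ≤ k) :
    ∑ r ∈ Fintype.piFinset (fun _ : Fin k => q.divisors),
      (∏ i, ((ArithmeticFunction.moebius (r i) : ℝ) ^ 2 / (Nat.totient (r i) : ℝ))) *
        (((Fintype.piFinset fun i => Finset.Icc 1 (r i)).filter
          (fun b => (∀ i, Nat.gcd (b i) (r i) = 1) ∧
            ∃ z : ℤ, ∑ i, (b i : ℚ) / (r i : ℚ) = (z : ℚ))).card : ℝ)
    ≤ ∏ p ∈ q.primeFactors, (1 + 2 ^ k / ((p : ℝ) - 1)) :=
  bounds_on_r_i_sums_no_Fs_general q hq k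
end

section
/- Let k, h, q ≥ 1 be integers and let 𝒫 = {S_1,...,S_M} be a set partition of {1,...,k} into M cells. Then Σ_{(d_1,...,d_k) ∈ {1,...,h}^k with Δ_𝒫(D) = 1} Σ_{𝒬 ⊆ {1,...,k}} (−1)^{|𝒬|} 𝔖(D_𝒬; q) = Σ_{(e_1,...,e_M) ∈ {1,...,h}^M} Σ_{𝒥 ⊆ {1,...,M}} ( ∏_{m ∈ 𝒥} P_{|S_m|}(q/φ(q)) ) · 𝔖(E_𝒥; q), where D_𝒬 denotes the subtuple of D = (d_1,...,d_k) indexed by 𝒬 and E_𝒥 denotes the subtuple of E = (e_1,...,e_M) indexed by 𝒥. -/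
/-!
A tuple constant on the cells of `𝒫` is `e ∘ π`, where `π` sends an index to its cell. Since
`𝔖(D; q) = (q/φ(q))^k ∏_{p ∣ q} (1 - ν_p(D)/p)` and `ν_p(D)` only sees the set of values of `D`,
the term of `Q` depends on `Q` only through `|Q|` and `J = π(Q)`. With `z = q/φ(q)` this leaves
`∑_{π(Q) = J} (-z)^{|Q|} = ∏_{S ∈ J} ((1 - z)^{|S|} - 1) = z^{|J|} ∏_{S ∈ J} P_{|S|}(z)`. The first
equality is Möbius inversion over the subsets of `J`: summed over all `Q` with `π(Q) ⊆ J`, both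
sides become `(1 - z)^{|π⁻¹(J)|}`.
-/

open Finset

/-- `Sq q X d = 𝔖(D_X; q) = ∏_{p | q} (1−1/p)^{−|X|}(1−ν_p(D_X)/p)`. -/
noncomputable def Sq (q : ℕ) {ι : Type*} [DecidableEq ι] (X : Finset ι) (d : ι → ℤ) : ℝ :=
  ∏ p ∈ q.primeFactors,
    (1 - 1 / (p : ℝ)) ^ (-(X.card : ℤ)) *
      (1 - ((X.image fun i => d i % (p : ℤ)).card : ℝ) / (p : ℝ))

/-- The polynomial `P_ℓ(z) = ((1−z)^ℓ − 1)/z = ∑_{j=1}^{ℓ} C(ℓ,j)(−1)^j z^{j−1}`. -/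
noncomputable def Ppoly (ℓ : ℕ) (z : ℝ) : ℝ :=
  ∑ j ∈ Finset.Icc 1 ℓ, (ℓ.choose j : ℝ) * (-1) ^ j * z ^ (j - 1)

theorem Ppoly_mul_self (ℓ : ℕ) (z : ℝ) : Ppoly ℓ z * z = (1 - z) ^ ℓ - 1 := by
  have hbinom : (1 - z) ^ ℓ = 1 + ∑ j ∈ Icc 1 ℓ, (ℓ.choose j : ℝ) * (-z) ^ j := by
    rw [sub_eq_neg_add, add_pow, range_eq_Ico, sum_eq_sum_Ico_succ_bot (Nat.zero_lt_succ ℓ),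
      Nat.succ_eq_add_one, Ico_add_one_right_eq_Icc]
    simp [mul_comm]
  rw [hbinom, add_sub_cancel_left, Ppoly, sum_mul]
  refine sum_congr rfl fun j hj => ?_
  obtain ⟨i, rfl⟩ := Nat.exists_eq_add_of_le' (mem_Icc.1 hj).1
  rw [neg_pow, Nat.add_sub_cancel, pow_succ]
  ring

noncomputable def residueProduct (q : ℕ) (V : Finset ℤ) : ℝ :=
  ∏ p ∈ q.primeFactors, (1 - (#(V.image (· % (p : ℤ))) : ℝ) / p)

theorem prod_primeFactors_one_sub_inv {q : ℕ} (hq : q ≠ 0) :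
    ∏ p ∈ q.primeFactors, (1 - 1 / (p : ℝ)) = q.totient / q := by
  have h := congrArg ((↑) : ℚ → ℝ) (Nat.totient_eq_mul_prod_factors q)
  push_cast at h
  rw [eq_div_iff (by positivity), h, mul_comm]
  simp only [one_div]

theorem Sq_eq_pow_mul_residueProduct {q : ℕ} (hq : q ≠ 0) {ι : Type*} [DecidableEq ι]
    (X : Finset ι) (d : ι → ℤ) :
    Sq q X d = ((q : ℝ) / q.totient) ^ #X * residueProduct q (X.image d) := by
  rw [Sq, prod_mul_distrib, residueProduct]
  simp only [zpow_neg, zpow_natCast, prod_inv_distrib, prod_pow, prod_primeFactors_one_sub_inv hq,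
    ← inv_pow, inv_div, image_image]
  rfl

theorem Finset.eq_of_forall_sum_powerset_eq {β R : Type*} [DecidableEq β] [CommRing R]
    {f g : Finset β → R} (h : ∀ J : Finset β, ∑ I ∈ J.powerset, f I = ∑ I ∈ J.powerset, g I) :
    f = g := by
  funext J
  rw [IncidenceAlgebra.moebius_inversion_bot f _ (fun _ => rfl) J,
    IncidenceAlgebra.moebius_inversion_bot g _ (fun _ => rfl) J]
  simp only [Iic_eq_powerset, h]

section Fibers

variable {α β R : Type*} [Fintype α] [DecidableEq α] [DecidableEq β] [CommRing R] (π : α → β)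

theorem sum_filter_image_subset_pow_card (J : Finset β) (x : R) :
    ∑ Q ∈ univ.powerset with Q.image π ⊆ J, x ^ #Q = ∏ b ∈ J, (1 + x) ^ #{a | π a = b} := by
  have hfilter : {Q ∈ (univ : Finset α).powerset | Q.image π ⊆ J} =
      ({a | π a ∈ J} : Finset α).powerset := by
    ext Q
    simp [subset_iff]
  have hcard : #({a | π a ∈ J} : Finset α) = ∑ b ∈ J, #{a | π a = b} := by
    rw [card_eq_sum_card_fiberwise (s := ({a | π a ∈ J} : Finset α)) (f := π) (t := J)
      fun a ha => by simpa using ha]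
    simp_rw [filter_filter]
    refine sum_congr rfl fun b hb => congrArg card (filter_congr fun a _ => ?_)
    exact and_iff_right_of_imp fun hab => hab ▸ hb
  rw [hfilter, prod_pow_eq_pow_sum, ← hcard, ← prod_const, prod_one_add]
  simp only [prod_const]

theorem sum_filter_image_eq_pow_card (J : Finset β) (x : R) :
    ∑ Q ∈ univ.powerset with Q.image π = J, x ^ #Q = ∏ b ∈ J, ((1 + x) ^ #{a | π a = b} - 1) := by
  revert J
  rw [← funext_iff]
  refine eq_of_forall_sum_powerset_eq fun J => ?_
  rw [← prod_add_one]
  simp only [sub_add_cancel, ← sum_filter_image_subset_pow_card, sum_filter]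
  rw [sum_comm]
  simp only [sum_ite_eq, mem_powerset]

theorem sum_powerset_pow_card_mul_image [Fintype β] (W : Finset β → R) (x : R) :
    ∑ Q ∈ univ.powerset, x ^ #Q * W (Q.image π) =
      ∑ J ∈ univ.powerset, (∏ b ∈ J, ((1 + x) ^ #{a | π a = b} - 1)) * W J := by
  rw [← sum_fiberwise_of_maps_to (t := univ.powerset) (g := image π)
    (fun Q _ => mem_powerset.2 (subset_univ _))]
  refine sum_congr rfl fun J _ => ?_
  rw [← sum_filter_image_eq_pow_card, sum_mul]
  exact sum_congr rfl fun Q hQ => by rw [(mem_filter.1 hQ).2]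

end Fibers

theorem sum_neg_one_pow_mul_Sq_comp {α β : Type*} [Fintype α] [DecidableEq α] [Fintype β]
    [DecidableEq β] {q : ℕ} (hq : q ≠ 0) (π : α → β) (e : β → ℤ) :
    ∑ Q ∈ univ.powerset, (-1 : ℝ) ^ #Q * Sq q Q (e ∘ π) =
      ∑ J ∈ univ.powerset,
        (∏ b ∈ J, Ppoly #{a | π a = b} ((q : ℝ) / q.totient)) * Sq q J e := by
  set z : ℝ := q / q.totient with hz
  calc ∑ Q ∈ univ.powerset, (-1 : ℝ) ^ #Q * Sq q Q (e ∘ π)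
      = ∑ Q ∈ univ.powerset, (-z) ^ #Q * residueProduct q ((Q.image π).image e) :=
        sum_congr rfl fun Q _ => by
          rw [Sq_eq_pow_mul_residueProduct hq, ← hz, image_image, ← mul_assoc, ← mul_pow,
            neg_one_mul]
    _ = ∑ J ∈ univ.powerset,
          (∏ b ∈ J, ((1 - z) ^ #{a | π a = b} - 1)) * residueProduct q (J.image e) := by
        simp only [sum_powerset_pow_card_mul_image π (fun J => residueProduct q (J.image e)),
          ← sub_eq_add_neg]
    _ = _ := sum_congr rfl fun J _ => by
        simp only [← Ppoly_mul_self, prod_mul_distrib, prod_const,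
          Sq_eq_pow_mul_residueProduct hq, mul_assoc, hz]

theorem sum_filter_factorsThrough_piFinset {α β γ M : Type*} [Fintype α] [DecidableEq α]
    [Fintype β] [DecidableEq β] [DecidableEq γ] [AddCommMonoid M] {π : α → β}
    (hπ : π.Surjective) (s : Finset γ) {p : (α → γ) → Prop} [DecidablePred p]
    (hp : ∀ d, p d ↔ d.FactorsThrough π) (F : (α → γ) → M) :
    ∑ d ∈ (Fintype.piFinset fun _ => s).filter p, F d =
      ∑ e ∈ Fintype.piFinset fun _ => s, F (e ∘ π) := by
  have himage : (Fintype.piFinset fun _ => s).filter p =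
      (Fintype.piFinset fun _ : β => s).image (· ∘ π) := by
    ext d
    simp only [mem_filter, mem_image, hp, Fintype.mem_piFinset]
    constructor
    · rintro ⟨hds, hd⟩
      refine ⟨d ∘ Function.surjInv hπ, fun b => hds _, funext fun a => ?_⟩
      exact hd (Function.surjInv_eq hπ (π a))
    · rintro ⟨e, he, rfl⟩
      exact ⟨fun a => he (π a), fun a b hab => congrArg e hab⟩
  rw [himage, sum_image hπ.injective_comp_right.injOn]

namespace Finpartition

variable {α : Type*} [Fintype α] [DecidableEq α] (P : Finpartition (univ : Finset α))

def partMap (a : α) : P.parts := ⟨P.part a, P.part_mem.2 (mem_univ a)⟩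

theorem partMap_eq_iff {a : α} {S : P.parts} : P.partMap a = S ↔ a ∈ (S : Finset α) :=
  Subtype.ext_iff.trans (P.part_eq_iff_mem S.2)

theorem filter_partMap_eq (S : P.parts) : ({a | P.partMap a = S} : Finset α) = S := by
  ext a
  simp [partMap_eq_iff]

theorem partMap_surjective : P.partMap.Surjective := fun S =>
  let ⟨a, ha⟩ := P.nonempty_of_mem_parts S.2
  ⟨a, P.partMap_eq_iff.2 ha⟩

theorem factorsThrough_partMap_iff {γ : Type*} (d : α → γ) :
    d.FactorsThrough P.partMap ↔ ∀ S ∈ P.parts, ∀ i ∈ S, ∀ j ∈ S, d i = d j := by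
  constructor
  · intro hd S hS i hi j hj
    exact hd ((P.partMap_eq_iff (S := ⟨S, hS⟩)).2 hi |>.trans (P.partMap_eq_iff.2 hj).symm)
  · intro hd i j hij
    exact hd _ (P.partMap i).2 i (P.partMap_eq_iff.1 rfl) j (P.partMap_eq_iff.1 hij.symm)

end Finpartition

theorem partitions_to_polynomial_coefficients_S_general (k h q : ℕ)
    (hq : 1 ≤ q) (P : Finpartition (Finset.univ : Finset (Fin k))) :
    ∑ d ∈ (Fintype.piFinset fun _ : Fin k => Finset.Icc (1 : ℤ) (h : ℤ)).filter
        (fun d => ∀ S ∈ P.parts, ∀ i ∈ S, ∀ j ∈ S, d i = d j),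
      ∑ Q ∈ (Finset.univ : Finset (Fin k)).powerset, (-1 : ℝ) ^ Q.card * Sq q Q d
    = ∑ e ∈ Fintype.piFinset fun _ : P.parts => Finset.Icc (1 : ℤ) (h : ℤ),
        ∑ J ∈ (Finset.univ : Finset P.parts).powerset,
          (∏ S ∈ J, Ppoly (S : Finset (Fin k)).card ((q : ℝ) / (Nat.totient q : ℝ))) *
            Sq q J e := by
  rw [sum_filter_factorsThrough_piFinset P.partMap_surjective _
    (fun d => (P.factorsThrough_partMap_iff d).symm)]
  refine sum_congr rfl fun e _ => ?_
  simp only [sum_neg_one_pow_mul_Sq_comp (Nat.one_le_iff_ne_zero.mp hq) P.partMap e,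
    P.filter_partMap_eq]

theorem partitions_to_polynomial_coefficients_S (k h q : ℕ) (hk : 1 ≤ k) (hh : 1 ≤ h)
    (hq : 1 ≤ q) (P : Finpartition (Finset.univ : Finset (Fin k))) :
    ∑ d ∈ (Fintype.piFinset fun _ : Fin k => Finset.Icc (1 : ℤ) (h : ℤ)).filter
        (fun d => ∀ S ∈ P.parts, ∀ i ∈ S, ∀ j ∈ S, d i = d j),
      ∑ Q ∈ (Finset.univ : Finset (Fin k)).powerset, (-1 : ℝ) ^ Q.card * Sq q Q d
    = ∑ e ∈ Fintype.piFinset fun _ : P.parts => Finset.Icc (1 : ℤ) (h : ℤ),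
        ∑ J ∈ (Finset.univ : Finset P.parts).powerset,
          (∏ S ∈ J, Ppoly (S : Finset (Fin k)).card ((q : ℝ) / (Nat.totient q : ℝ))) *
            Sq q J e :=
  partitions_to_polynomial_coefficients_S_general k h q hq P
end

section
/- For any integer k ≥ 1 and any positive integers q_1,...,q_k there exists a family (g_I)_{I ⊆ {1,...,k}} of positive integers with g_∅ = 1 such that: (i) q_i = ∏_{I : i ∈ I} g_I for every 1 ≤ i ≤ k; and (ii) for all subsets I, J ⊆ {1,...,k}, if gcd(g_I, g_J) > 1 then I ⊆ J or J ⊆ I. -/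
/-!
For a fixed prime `p`, the sets `{i | t < v_p(q_i)}`, `t = 0, 1, 2, …`, form a decreasing chain,
and `i` lies in exactly `v_p(q_i)` of them. Let `g_I` be the product over `p` of `p` raised to the
number of levels `t` at which this set equals `I`. Then the exponent of `p` in `∏_{I ∋ i} g_I` is
`v_p(q_i)`, and a prime dividing both `g_I` and `g_J` exhibits `I` and `J` in one chain.
-/

open Finset

namespace RelativeGcd

variable {ι : Type*} [Fintype ι]

def levelSet (e : ι → ℕ) (t : ℕ) : Finset ι := {i | t < e i}

theorem levelSet_antitone (e : ι → ℕ) : Antitone (levelSet e) := fun _ _ hts _ hi => by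
  simp only [levelSet, mem_filter, mem_univ, true_and] at hi ⊢
  omega

variable [DecidableEq ι]

-- Only levels below `max e` are counted, so that `∅` gets multiplicity zero.
def levelMult (e : ι → ℕ) (I : Finset ι) : ℕ := #{t ∈ range (univ.sup e) | levelSet e t = I}

theorem levelMult_empty (e : ι → ℕ) : levelMult e ∅ = 0 := by
  refine card_eq_zero.2 (filter_eq_empty_iff.2 fun t ht hempty => ?_)
  obtain ⟨i, -, hi⟩ := (Finset.lt_sup_iff (s := univ)).1 (mem_range.1 ht)
  have hmem : i ∈ levelSet e t := by simpa [levelSet] using hi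
  simp [hempty] at hmem

theorem sum_levelMult_of_mem (e : ι → ℕ) (i : ι) :
    ∑ I with i ∈ I, levelMult e I = e i := by
  have hlevels : {t ∈ range (univ.sup e) | i ∈ levelSet e t} = range (e i) := by
    ext t
    simp only [levelSet, mem_filter, mem_range, mem_univ, true_and]
    exact ⟨And.right, fun ht => ⟨ht.trans_le (le_sup (mem_univ i)), ht⟩⟩
  calc ∑ I with i ∈ I, levelMult e I
      = ∑ I with i ∈ I, #{t ∈ {t ∈ range (univ.sup e) | i ∈ levelSet e t} | levelSet e t = I} := by
        refine sum_congr rfl fun I hI => congrArg card ?_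
        rw [filter_filter]
        refine filter_congr fun t _ => ⟨fun h => ⟨h ▸ (mem_filter.1 hI).2, h⟩, And.right⟩
    _ = #{t ∈ range (univ.sup e) | i ∈ levelSet e t} :=
        (card_eq_sum_card_fiberwise fun t ht => by simpa using (mem_filter.1 ht).2).symm
    _ = e i := by rw [hlevels, card_range]

theorem exists_levelSet_eq_of_levelMult_pos {e : ι → ℕ} {I : Finset ι} (h : 0 < levelMult e I) :
    ∃ t, levelSet e t = I := by
  obtain ⟨t, ht⟩ := card_pos.1 h
  exact ⟨t, (mem_filter.1 ht).2⟩

theorem subset_or_subset_of_levelMult_pos {e : ι → ℕ} {I J : Finset ι}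
    (hI : 0 < levelMult e I) (hJ : 0 < levelMult e J) : I ⊆ J ∨ J ⊆ I := by
  obtain ⟨t, rfl⟩ := exists_levelSet_eq_of_levelMult_pos hI
  obtain ⟨s, rfl⟩ := exists_levelSet_eq_of_levelMult_pos hJ
  rcases le_total t s with hts | hst
  · exact Or.inr (levelSet_antitone e hts)
  · exact Or.inl (levelSet_antitone e hst)

end RelativeGcd

theorem Nat.prod_pow_factorization_of_primeFactors_subset {n : ℕ} (hn : n ≠ 0) {P : Finset ℕ}
    (hP : n.primeFactors ⊆ P) : ∏ p ∈ P, p ^ n.factorization p = n :=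
  (Finsupp.prod_of_support_subset _ (by simpa using hP) _ fun _ _ => pow_zero _).symm.trans
    (Nat.prod_factorization_pow_eq_self hn)

theorem Nat.Prime.pos_of_dvd_prod_pow {p : ℕ} (hp : p.Prime) {P : Finset ℕ}
    (hP : ∀ p' ∈ P, p'.Prime) {n : ℕ → ℕ} (h : p ∣ ∏ p' ∈ P, p' ^ n p') : 0 < n p := by
  obtain ⟨p', hp', hdvd⟩ := hp.prime.exists_mem_finset_dvd h
  obtain rfl : p = p' := (Nat.prime_dvd_prime_iff_eq hp (hP p' hp')).1 (hp.dvd_of_dvd_pow hdvd)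
  refine Nat.pos_of_ne_zero fun hzero => hp.ne_one ?_
  rwa [hzero, pow_zero, Nat.dvd_one] at hdvd

open RelativeGcd in
theorem relative_gcd_parameterisation_general (k : ℕ)
    (q : Fin k → ℕ) (hq : ∀ i, 0 < q i) :
    ∃ g : Finset (Fin k) → ℕ, (∀ I, 0 < g I) ∧ g ∅ = 1 ∧
      (∀ i, q i = ∏ I ∈ (Finset.univ : Finset (Finset (Fin k))).filter (fun I => i ∈ I), g I) ∧
      (∀ I J : Finset (Fin k), 1 < Nat.gcd (g I) (g J) → I ⊆ J ∨ J ⊆ I) := by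
  set P := (∏ i, q i).primeFactors
  have hP : ∀ p ∈ P, p.Prime := fun _ => Nat.prime_of_mem_primeFactors
  let m (p : ℕ) : Finset (Fin k) → ℕ := levelMult fun i => (q i).factorization p
  refine ⟨fun I => ∏ p ∈ P, p ^ m p I, fun I => prod_pos fun p hp => pow_pos (hP p hp).pos _,
    by simp [m, levelMult_empty], fun i => ?_, fun I J h => ?_⟩
  · have hsub : (q i).primeFactors ⊆ P :=
      Nat.primeFactors_mono (dvd_prod_of_mem q (mem_univ i)) (prod_pos fun j _ => hq j).ne'
    rw [prod_comm]
    simp_rw [prod_pow_eq_pow_sum, m, sum_levelMult_of_mem]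
    exact (Nat.prod_pow_factorization_of_primeFactors_subset (hq i).ne' hsub).symm
  · obtain ⟨p, hp, hpgcd⟩ := Nat.exists_prime_and_dvd h.ne'
    exact subset_or_subset_of_levelMult_pos
      (hp.pos_of_dvd_prod_pow hP (hpgcd.trans (Nat.gcd_dvd_left _ _)))
      (hp.pos_of_dvd_prod_pow hP (hpgcd.trans (Nat.gcd_dvd_right _ _)))

theorem relative_gcd_parameterisation (k : ℕ) (hk : 1 ≤ k)
    (q : Fin k → ℕ) (hq : ∀ i, 0 < q i) :
    ∃ g : Finset (Fin k) → ℕ, (∀ I, 0 < g I) ∧ g ∅ = 1 ∧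
      (∀ i, q i = ∏ I ∈ (Finset.univ : Finset (Finset (Fin k))).filter (fun I => i ∈ I), g I) ∧
      (∀ I J : Finset (Fin k), 1 < Nat.gcd (g I) (g J) → I ⊆ J ∨ J ⊆ I) :=
  relative_gcd_parameterisation_general k q hq
end

section
/- For any integer k ≥ 1 and any squarefree positive integers q_1,...,q_k there exists a family (g_I)_{I ⊆ {1,...,k}} of positive integers with g_∅ = 1 such that q_i = ∏_{I : i ∈ I} g_I for every 1 ≤ i ≤ k, and gcd(g_I, g_J) = 1 for all pairs of distinct subsets I ≠ J of {1,...,k}. -/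
/-!
Group the primes dividing some `q i` according to the set of indices `j` with `p ∣ q j`, and let
`g I` be the product of the primes whose set is exactly `I`. Distinct sets `I` receive disjoint sets
of primes, so the `g I` are pairwise coprime; no prime is attached to `∅`; and since `q i` is
squarefree it is the product of its prime factors, i.e. of the primes whose set contains `i`.
-/

open Finset

section RelativeGcd

variable {ι : Type*} [Fintype ι] (q : ι → ℕ)

def primeSupport : Finset ℕ := univ.biUnion fun i => (q i).primeFactors

def dvdIndices (p : ℕ) : Finset ι := {j | p ∣ q j}

variable {q}

@[simp]
lemma mem_dvdIndices {p : ℕ} {i : ι} : i ∈ dvdIndices q p ↔ p ∣ q i := by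
  simp [dvdIndices]

lemma prime_of_mem_primeSupport {p : ℕ} (hp : p ∈ primeSupport q) : p.Prime := by
  obtain ⟨i, -, hpi⟩ := mem_biUnion.mp hp
  exact Nat.prime_of_mem_primeFactors hpi

lemma dvdIndices_nonempty {p : ℕ} (hp : p ∈ primeSupport q) : (dvdIndices q p).Nonempty := by
  obtain ⟨i, -, hpi⟩ := mem_biUnion.mp hp
  exact ⟨i, mem_dvdIndices.mpr (Nat.dvd_of_mem_primeFactors hpi)⟩

lemma filter_dvd_primeSupport {i : ι} (hi : q i ≠ 0) :
    {p ∈ primeSupport q | p ∣ q i} = (q i).primeFactors := by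
  ext p
  simp only [mem_filter, primeSupport, mem_biUnion, mem_univ, true_and, Nat.mem_primeFactors]
  exact ⟨fun ⟨⟨_, hp, _⟩, hpi⟩ => ⟨hp, hpi, hi⟩, fun ⟨hp, hpi, _⟩ => ⟨⟨i, hp, hpi, hi⟩, hpi⟩⟩

variable [DecidableEq ι]

variable (q) in
def relativeGcd (I : Finset ι) : ℕ := ∏ p ∈ primeSupport q with dvdIndices q p = I, p

lemma relativeGcd_pos (I : Finset ι) : 0 < relativeGcd q I :=
  prod_pos fun _ hp => (prime_of_mem_primeSupport (mem_filter.mp hp).1).pos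

variable (q) in
lemma relativeGcd_empty : relativeGcd q ∅ = 1 :=
  prod_eq_one fun _ hp => absurd (mem_filter.mp hp).2
    (dvdIndices_nonempty (mem_filter.mp hp).1).ne_empty

lemma coprime_relativeGcd {I J : Finset ι} (hIJ : I ≠ J) :
    Nat.Coprime (relativeGcd q I) (relativeGcd q J) := by
  refine Nat.Coprime.prod_left fun p hp => Nat.Coprime.prod_right fun r hr => ?_
  rw [mem_filter] at hp hr
  rw [Nat.coprime_primes (prime_of_mem_primeSupport hp.1) (prime_of_mem_primeSupport hr.1)]
  rintro rfl
  exact hIJ (hp.2.symm.trans hr.2)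

lemma prod_relativeGcd_of_squarefree {i : ι} (hi : Squarefree (q i)) :
    ∏ I with i ∈ I, relativeGcd q I = q i := by
  calc ∏ I with i ∈ I, relativeGcd q I
      = ∏ I, ∏ p ∈ primeSupport q with dvdIndices q p = I, if p ∣ q i then p else 1 := by
        rw [prod_filter]
        refine prod_congr rfl fun I _ => ?_
        split_ifs with hiI
        · refine prod_congr rfl fun p hp => (if_pos ?_).symm
          rw [← mem_dvdIndices, (mem_filter.mp hp).2]
          exact hiI
        · refine (prod_eq_one fun p hp => if_neg ?_).symm
          rwa [← mem_dvdIndices, (mem_filter.mp hp).2]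
    _ = ∏ p ∈ primeSupport q, if p ∣ q i then p else 1 := prod_fiberwise _ _ _
    _ = q i := by
      rw [← prod_filter, filter_dvd_primeSupport hi.ne_zero, Nat.prod_primeFactors_of_squarefree hi]

end RelativeGcd

theorem relative_gcd_parameterisation_squarefree_general (k : ℕ)
    (q : Fin k → ℕ) (hq : ∀ i, Squarefree (q i)) :
    ∃ g : Finset (Fin k) → ℕ, (∀ I, 0 < g I) ∧ g ∅ = 1 ∧
      (∀ i, q i = ∏ I ∈ (Finset.univ : Finset (Finset (Fin k))).filter (fun I => i ∈ I), g I) ∧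
      (∀ I J : Finset (Fin k), I ≠ J → Nat.gcd (g I) (g J) = 1) :=
  ⟨relativeGcd q, relativeGcd_pos, relativeGcd_empty q,
    fun i => (prod_relativeGcd_of_squarefree (hq i)).symm, fun _ _ hIJ => coprime_relativeGcd hIJ⟩

theorem relative_gcd_parameterisation_squarefree (k : ℕ) (hk : 1 ≤ k)
    (q : Fin k → ℕ) (hq0 : ∀ i, 0 < q i) (hq : ∀ i, Squarefree (q i)) :
    ∃ g : Finset (Fin k) → ℕ, (∀ I, 0 < g I) ∧ g ∅ = 1 ∧
      (∀ i, q i = ∏ I ∈ (Finset.univ : Finset (Finset (Fin k))).filter (fun I => i ∈ I), g I) ∧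
      (∀ I J : Finset (Fin k), I ≠ J → Nat.gcd (g I) (g J) = 1) :=
  relative_gcd_parameterisation_squarefree_general k q hq
end

section
/- Let k ≥ 1 and h ≥ 1 be integers, let y ≥ h be a real number, let q be a squarefree positive integer all of whose prime factors are at most y, and let q_1,...,q_k be positive divisors of q. Then there exist positive integers s_1,...,s_k and r_1,...,r_k such that: (i) q_i = s_i·r_i for all i; (ii) s_i ≤ y^{2k} for all i; (iii) gcd(s_1⋯s_k, r_1⋯r_k) = 1; (iv) whenever q_i > h, also s_i > h; and (v) whenever q_i ≤ h, we have s_i = q_i and r_i = 1. -/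
/-!
For each `i` pick a divisor `t i` of `qs i`: `qs i` itself when `qs i ≤ h`, and otherwise the
least divisor of `qs i` exceeding `h`, which is at most `h` times its least prime factor, so at most
`h y ≤ y²`. With `m` the lcm of the `t i`, put `s i = gcd (qs i) m` and `r i = qs i / s i`. Then
`t i ∣ s i ∣ m`, so `s i ≤ m ≤ ∏ t j ≤ y ^ (2k)`, and since `qs i` is squarefree, `r i` shares no
prime with `m`, hence none with any `s j`.
-/

namespace Nat

theorem exists_dvd_lt_le_minFac_mul {n h : ℕ} (hh : 0 < h) (hn : h < n) :
    ∃ t, t ∣ n ∧ h < t ∧ t ≤ t.minFac * h := by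
  have hex : ∃ d, d ∣ n ∧ h < d := ⟨n, dvd_rfl, hn⟩
  set t := Nat.find hex
  obtain ⟨htn, hht⟩ : t ∣ n ∧ h < t := Nat.find_spec hex
  refine ⟨t, htn, hht, ?_⟩
  have ht1 : t ≠ 1 := by omega
  have hquot : t / t.minFac ≤ h := by
    by_contra! hlt
    exact Nat.find_min hex (Nat.div_lt_self (by omega) (Nat.minFac_prime ht1).one_lt)
      ⟨(Nat.div_dvd_of_dvd (Nat.minFac_dvd t)).trans htn, hlt⟩
  calc t = t.minFac * (t / t.minFac) := (Nat.mul_div_cancel' (Nat.minFac_dvd t)).symm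
    _ ≤ t.minFac * h := Nat.mul_le_mul_left _ hquot

end Nat

theorem exists_dvd_le_sq_of_primeFactors_le {n h : ℕ} (hh : 1 ≤ h) {y : ℝ} (hy : (h : ℝ) ≤ y)
    (hny : ∀ p : ℕ, p.Prime → p ∣ n → (p : ℝ) ≤ y) :
    ∃ t, t ∣ n ∧ (n ≤ h → t = n) ∧ (h < n → h < t) ∧ (t : ℝ) ≤ y ^ 2 := by
  have hy1 : (1 : ℝ) ≤ y := le_trans (by exact_mod_cast hh) hy
  rcases le_or_gt n h with hnh | hhn
  · refine ⟨n, dvd_rfl, fun _ => rfl, fun hlt => absurd hlt (not_lt.mpr hnh), ?_⟩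
    calc (n : ℝ) ≤ h := by exact_mod_cast hnh
      _ ≤ y := hy
      _ ≤ y ^ 2 := by nlinarith
  · obtain ⟨t, htn, hht, htp⟩ := Nat.exists_dvd_lt_le_minFac_mul hh hhn
    have hp : (t.minFac : ℝ) ≤ y :=
      hny _ (Nat.minFac_prime (by omega)) ((Nat.minFac_dvd t).trans htn)
    refine ⟨t, htn, fun hnh => absurd hhn (not_lt.mpr hnh), fun _ => hht, ?_⟩
    calc (t : ℝ) ≤ t.minFac * h := by exact_mod_cast htp
      _ ≤ y * y := by gcongr
      _ = y ^ 2 := (sq y).symm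

theorem Nat.coprime_prod_gcd_prod_div_gcd {ι : Type*} (s : Finset ι) {q : ι → ℕ}
    (hq : ∀ i ∈ s, Squarefree (q i)) {m : ℕ} (hm : m ≠ 0) :
    Coprime (∏ i ∈ s, gcd (q i) m) (∏ i ∈ s, q i / gcd (q i) m) :=
  Nat.Coprime.prod_left fun _ _ => Nat.Coprime.prod_right fun j hj =>
    ((Nat.coprime_div_gcd_of_squarefree (hq j hj) hm).symm).coprime_dvd_left (gcd_dvd_right _ _)

theorem divisor_factorisation_general (k h : ℕ) (hh : 1 ≤ h)
    (y : ℝ) (hy : (h : ℝ) ≤ y)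
    (q : ℕ) (hq : Squarefree q)
    (hqy : ∀ p : ℕ, p.Prime → p ∣ q → (p : ℝ) ≤ y)
    (qs : Fin k → ℕ) (hqs : ∀ i, qs i ∣ q) (hqs0 : ∀ i, 0 < qs i) :
    ∃ s r : Fin k → ℕ, (∀ i, 0 < s i) ∧ (∀ i, 0 < r i) ∧
      (∀ i, qs i = s i * r i) ∧
      (∀ i, (s i : ℝ) ≤ y ^ (2 * k)) ∧
      Nat.gcd (∏ i, s i) (∏ i, r i) = 1 ∧
      (∀ i, h < qs i → h < s i) ∧
      (∀ i, qs i ≤ h → s i = qs i ∧ r i = 1) := by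
  choose t htq hsmall hbig hty using fun i => exists_dvd_le_sq_of_primeFactors_le hh hy
    fun p hp hpi => hqy p hp (hpi.trans (hqs i))
  set m := Finset.univ.lcm t
  have hts : ∀ i, t i ∣ Nat.gcd (qs i) m := fun i => Nat.dvd_gcd (htq i) (Finset.dvd_lcm (by simp))
  have hspos : ∀ i, 0 < Nat.gcd (qs i) m := fun i => Nat.gcd_pos_of_pos_left _ (hqs0 i)
  have htpos : ∀ i, 0 < t i := fun i => Nat.pos_of_dvd_of_pos (htq i) (hqs0 i)
  have hm0 : m ≠ 0 := Finset.lcm_eq_zero_iff.not.mpr (by simp [(htpos _).ne'])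
  refine ⟨fun i => Nat.gcd (qs i) m, fun i => qs i / Nat.gcd (qs i) m, hspos,
    fun i => Nat.div_pos (Nat.gcd_le_left _ (hqs0 i)) (hspos i),
    fun i => (Nat.mul_div_cancel' (Nat.gcd_dvd_left _ _)).symm, fun i => ?_,
    Nat.coprime_prod_gcd_prod_div_gcd _ (fun i _ => hq.squarefree_of_dvd (hqs i)) hm0,
    fun i hi => (hbig i hi).trans_le (Nat.le_of_dvd (hspos i) (hts i)), fun i hi => ?_⟩
  · have hm : Nat.gcd (qs i) m ≤ ∏ j, t j := Nat.le_of_dvd (Finset.prod_pos fun j _ => htpos j)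
      ((Nat.gcd_dvd_right _ _).trans (Finset.lcm_dvd_prod _ _))
    calc (Nat.gcd (qs i) m : ℝ) ≤ ∏ j, (t j : ℝ) := by exact_mod_cast hm
      _ ≤ ∏ _j : Fin k, y ^ 2 := Finset.prod_le_prod (fun j _ => by positivity) fun j _ => hty j
      _ = y ^ (2 * k) := by rw [Finset.prod_const, Finset.card_fin, pow_mul]
  · have hqm : qs i ∣ m := hsmall i hi ▸ Finset.dvd_lcm (Finset.mem_univ i)
    simp only [Nat.gcd_eq_left hqm, Nat.div_self (hqs0 i), and_self]

theorem divisor_factorisation (k h : ℕ) (hk : 1 ≤ k) (hh : 1 ≤ h)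
    (y : ℝ) (hy : (h : ℝ) ≤ y)
    (q : ℕ) (hq : Squarefree q) (hq0 : 0 < q)
    (hqy : ∀ p : ℕ, p.Prime → p ∣ q → (p : ℝ) ≤ y)
    (qs : Fin k → ℕ) (hqs : ∀ i, qs i ∣ q) (hqs0 : ∀ i, 0 < qs i) :
    ∃ s r : Fin k → ℕ, (∀ i, 0 < s i) ∧ (∀ i, 0 < r i) ∧
      (∀ i, qs i = s i * r i) ∧
      (∀ i, (s i : ℝ) ≤ y ^ (2 * k)) ∧
      Nat.gcd (∏ i, s i) (∏ i, r i) = 1 ∧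
      (∀ i, h < qs i → h < s i) ∧
      (∀ i, qs i ≤ h → s i = qs i ∧ r i = 1) :=
  divisor_factorisation_general k h hh y hy q hq hqy qs hqs hqs0
end

section
/- Let h ≥ 1 be an integer and y ≥ h a real number. If q is a squarefree positive integer with q > h all of whose prime factors are at most y, then q has a positive divisor d with h < d ≤ y². -/
/-!
Let `d` be the least divisor of `q` exceeding `h`, and `p` its least prime factor. The cofactor
`d / p` is a smaller divisor of `q`, so it is at most `h ≤ y`; as `p ≤ y`, `d ≤ y²`.
-/

theorem Nat.exists_dvd_gt_le_minFac_mul {n h : ℕ} (hh : 0 < h) (hn : h < n) :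
    ∃ d, d ∣ n ∧ h < d ∧ d ≤ d.minFac * h := by
  classical
  have hP : ∃ d, d ∣ n ∧ h < d := ⟨n, dvd_rfl, hn⟩
  obtain ⟨hdn, hhd⟩ := Nat.find_spec hP
  refine ⟨_, hdn, hhd, ?_⟩
  set d := Nat.find hP
  have hp : d.minFac.Prime := Nat.minFac_prime (by omega)
  have hcofactor : d / d.minFac ≤ h := not_lt.1 fun hlt =>
    Nat.find_min hP (Nat.div_lt_self (by omega) hp.one_lt)
      ⟨(Nat.div_dvd_of_dvd (Nat.minFac_dvd d)).trans hdn, hlt⟩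
  calc d = d.minFac * (d / d.minFac) := (Nat.mul_div_cancel' (Nat.minFac_dvd d)).symm
    _ ≤ d.minFac * h := Nat.mul_le_mul_left _ hcofactor

theorem smooth_squarefree_has_medium_divisor_general (h : ℕ) (hh : 1 ≤ h)
    (y : ℝ) (hy : (h : ℝ) ≤ y)
    (q : ℕ) (hqh : h < q)
    (hqy : ∀ p : ℕ, p.Prime → p ∣ q → (p : ℝ) ≤ y) :
    ∃ d : ℕ, 0 < d ∧ d ∣ q ∧ h < d ∧ (d : ℝ) ≤ y ^ 2 := by
  obtain ⟨d, hdq, hhd, hd⟩ := Nat.exists_dvd_gt_le_minFac_mul hh hqh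
  have hp : (d.minFac : ℝ) ≤ y :=
    hqy _ (Nat.minFac_prime (by omega)) ((Nat.minFac_dvd d).trans hdq)
  refine ⟨d, by omega, hdq, hhd, ?_⟩
  calc (d : ℝ) ≤ d.minFac * h := by exact_mod_cast hd
    _ ≤ y * y := mul_le_mul hp hy (Nat.cast_nonneg _) (hp.trans' (Nat.cast_nonneg _))
    _ = y ^ 2 := (sq y).symm

theorem smooth_squarefree_has_medium_divisor (h : ℕ) (hh : 1 ≤ h)
    (y : ℝ) (hy : (h : ℝ) ≤ y)
    (q : ℕ) (hq : Squarefree q) (hqh : h < q)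
    (hqy : ∀ p : ℕ, p.Prime → p ∣ q → (p : ℝ) ≤ y) :
    ∃ d : ℕ, 0 < d ∧ d ∣ q ∧ h < d ∧ (d : ℝ) ≤ y ^ 2 :=
  smooth_squarefree_has_medium_divisor_general h hh y hy q hqh hqy
end

section
/- Let q be a squarefree positive integer, let h ≥ 1 be an integer, and let k_1, k_2 ≥ 0 be integers with k = k_1 + k_2. Then M_{k_1,k_2}(q,h) = q · (φ(q)/q)^{k} · V_{k_1,k_2}(q,h). -/
/-!
For squarefree `q` the indicator of `gcd(m, q) = 1` has the finite Fourier expansion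
`(φ(q)/q) ∑_{e ∣ q} μ(e)/φ(e) ∑_{b mod e, (b,e)=1} e(bm/e)`: write it as
`∑_{d ∣ (m,q)} μ(d) = ∑_{d ∣ q} μ(d)/d ∑_{a ≤ d} e(am/d)`, group the fractions `a/d` by their
reduced denominator `e`, and evaluate `∑_{e ∣ d ∣ q} μ(d)/d = (φ(q)/q) μ(e)/φ(e)` using that `μ`
and `φ` are multiplicative and `e` is coprime to `q/e`. Summing over the window `[n, n+h)` turns
`e(bm/e)` into `e(b(n-1)/e) E(b/e)`, and the `e = 1` term is exactly `h`, so `N(n) - (φ(q)/q)h` is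
`φ(q)/q` times the sum over `e > 1`. Expanding the powers into a sum over tuples `(q_i)` and
summing over `n ∈ [1, q]` with `∑_n e((n-1)x) = q·[x ∈ ℤ]` (valid as `qx ∈ ℤ`) leaves `V`.
-/

open scoped Classical

/-- `Mkk q h k₁ k₂ = ∑_{n=1}^{q} (N(n) − (φ(q)/q)h)^{k₁} N(n)^{k₂}` where
`N(n) = #{m : n ≤ m < n+h, gcd(m,q)=1}`. -/
noncomputable def Mkk (q h k₁ k₂ : ℕ) : ℝ :=
  ∑ n ∈ Finset.Icc 1 q,
    ((((Finset.Ico n (n + h)).filter (fun m => Nat.gcd m q = 1)).card : ℝ)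
        - (Nat.totient q : ℝ) / (q : ℝ) * (h : ℝ)) ^ k₁ *
      ((((Finset.Ico n (n + h)).filter (fun m => Nat.gcd m q = 1)).card : ℝ)) ^ k₂

/-- `Efun h x = ∑_{m=1}^{h} e^{2πimx}`. -/
noncomputable def Efun (h : ℕ) (x : ℚ) : ℂ :=
  ∑ m ∈ Finset.Icc 1 h, Complex.exp (2 * Real.pi * Complex.I * (m : ℂ) * (x : ℂ))

/-- `Vkk q h k₁ k₂`: the sum over `(k₁+k₂)`-tuples of divisors of `q`, with
`qᵢ > 1` for the first `k₁` indices, of `∏ μ(qᵢ)/φ(qᵢ)` times the sum of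
`∏ E(aᵢ/qᵢ)` over admissible numerators. -/
noncomputable def Vkk (q h k₁ k₂ : ℕ) : ℂ :=
  ∑ qs ∈ (Fintype.piFinset fun _ : Fin (k₁ + k₂) => q.divisors).filter
      (fun qs => ∀ i : Fin (k₁ + k₂), (i : ℕ) < k₁ → 1 < qs i),
    (∏ i, ((ArithmeticFunction.moebius (qs i) : ℂ) / (Nat.totient (qs i) : ℂ))) *
      ∑ a ∈ (Fintype.piFinset fun i => Finset.Icc 1 (qs i)).filter
          (fun a => (∀ i, Nat.gcd (a i) (qs i) = 1) ∧
            ∃ z : ℤ, ∑ i, (a i : ℚ) / (qs i : ℚ) = (z : ℚ)),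
        ∏ i, Efun h ((a i : ℚ) / (qs i : ℚ))

open Finset ArithmeticFunction
open scoped ArithmeticFunction.Moebius

lemma sum_Icc_one_eq_sum_range {M : Type*} [AddCommMonoid M] (f : ℕ → M) (d : ℕ) :
    ∑ a ∈ Icc 1 d, f a = ∑ a ∈ range d, f (a + 1) := by
  rw [range_eq_Ico, sum_Ico_add', zero_add, Ico_add_one_right_eq_Icc]

lemma sum_range_pow_eq_ite {K : Type*} [Field K] {ζ : K} {d : ℕ} (hζ : ζ ^ d = 1) :
    ∑ a ∈ range d, ζ ^ a = if ζ = 1 then (d : K) else 0 := by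
  split_ifs with h
  · simp [h]
  · rw [geom_sum_eq h, hζ, sub_self, zero_div]

lemma sum_Icc_pow_eq_ite {K : Type*} [Field K] {ζ : K} {d : ℕ} (hζ : ζ ^ d = 1) :
    ∑ a ∈ Icc 1 d, ζ ^ a = if ζ = 1 then (d : K) else 0 := by
  simp_rw [sum_Icc_one_eq_sum_range, pow_succ, ← sum_mul, sum_range_pow_eq_ite hζ]
  split_ifs with h <;> simp [h]

lemma sum_filter_pow_mul_sum_pow {α R : Type*} [CommSemiring R] (s : Finset α) (p : α → Prop)
    [DecidablePred p] (f : α → R) (k₁ k₂ : ℕ) :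
    (∑ x ∈ s with p x, f x) ^ k₁ * (∑ x ∈ s, f x) ^ k₂ =
      ∑ xs ∈ Fintype.piFinset (fun _ : Fin (k₁ + k₂) => s) with
        ∀ i : Fin (k₁ + k₂), (i : ℕ) < k₁ → p (xs i), ∏ i, f (xs i) := by
  let t : Fin (k₁ + k₂) → Finset α := fun i => if (i : ℕ) < k₁ then {x ∈ s | p x} else s
  have hmem (i : Fin (k₁ + k₂)) (x : α) : x ∈ t i ↔ x ∈ s ∧ ((i : ℕ) < k₁ → p x) := by
    by_cases hi : (i : ℕ) < k₁ <;> simp [t, hi]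
  have ht : Fintype.piFinset t = {xs ∈ Fintype.piFinset (fun _ : Fin (k₁ + k₂) => s) |
      ∀ i : Fin (k₁ + k₂), (i : ℕ) < k₁ → p (xs i)} := by
    ext xs
    simp only [Fintype.mem_piFinset, mem_filter, hmem, forall_and]
  rw [← ht, ← prod_univ_sum, Fin.prod_univ_add]
  simp [t]

lemma sum_divisors_eq_sum_filter_one_lt_add {M : Type*} [AddCommMonoid M] {q : ℕ} (hq : q ≠ 0)
    (f : ℕ → M) : ∑ e ∈ q.divisors, f e = ∑ e ∈ q.divisors with 1 < e, f e + f 1 := by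
  have herase : {e ∈ q.divisors | 1 < e} = q.divisors.erase 1 := by
    ext e
    simp only [mem_filter, mem_erase, Nat.mem_divisors]
    constructor
    · rintro ⟨hdvd, he⟩
      exact ⟨he.ne', hdvd⟩
    · rintro ⟨he, hdvd, -⟩
      have he0 := Nat.pos_of_dvd_of_pos hdvd (Nat.pos_of_ne_zero hq)
      exact ⟨⟨hdvd, hq⟩, by omega⟩
  rw [herase, sum_erase_add _ _ (Nat.one_mem_divisors.2 hq)]

noncomputable def expChar : AddChar ℚ ℂ where
  toFun x := Complex.exp (2 * Real.pi * Complex.I * x)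
  map_zero_eq_one' := by simp
  map_add_eq_mul' x y := by push_cast; rw [mul_add, Complex.exp_add]

lemma expChar_apply (x : ℚ) : expChar x = Complex.exp (2 * Real.pi * Complex.I * x) := rfl

lemma expChar_eq_one_iff {x : ℚ} : expChar x = 1 ↔ ∃ z : ℤ, x = z := by
  have h2πI : 2 * Real.pi * Complex.I ≠ 0 := by simp [Real.pi_ne_zero]
  rw [expChar_apply, Complex.exp_eq_one_iff]
  refine exists_congr fun z => ?_
  rw [mul_comm (z : ℂ), mul_right_inj' h2πI]
  exact_mod_cast Iff.rfl

lemma expChar_intCast (z : ℤ) : expChar z = 1 := expChar_eq_one_iff.2 ⟨z, rfl⟩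

lemma expChar_natCast (n : ℕ) : expChar n = 1 := by exact_mod_cast expChar_intCast n

lemma expChar_sum {ι : Type*} (s : Finset ι) (x : ι → ℚ) :
    expChar (∑ i ∈ s, x i) = ∏ i ∈ s, expChar (x i) := by
  simp_rw [expChar_apply, Rat.cast_sum, mul_sum, Complex.exp_sum]

lemma sum_range_expChar_mul {d : ℕ} {x : ℚ} (hx : ∃ z : ℤ, d * x = z) :
    ∑ a ∈ range d, expChar (a * x) = if ∃ z : ℤ, x = z then (d : ℂ) else 0 := by
  obtain ⟨z, hz⟩ := hx
  have hpow : expChar x ^ d = 1 := by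
    rw [← AddChar.map_nsmul_eq_pow, nsmul_eq_mul, hz, expChar_intCast]
  simp_rw [← nsmul_eq_mul, AddChar.map_nsmul_eq_pow, sum_range_pow_eq_ite hpow, expChar_eq_one_iff]

lemma exists_intCast_eq_natCast_div_iff {d m : ℕ} (hd : d ≠ 0) :
    (∃ z : ℤ, (m / d : ℚ) = z) ↔ d ∣ m := by
  have hd' : (d : ℚ) ≠ 0 := by exact_mod_cast hd
  constructor
  · rintro ⟨z, hz⟩
    rw [div_eq_iff hd'] at hz
    exact Int.natCast_dvd_natCast.1 ⟨z, by exact_mod_cast hz.trans (mul_comm _ _)⟩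
  · rintro ⟨c, rfl⟩
    exact ⟨c, by push_cast; field_simp⟩

lemma sum_Icc_expChar_div_mul (d m : ℕ) :
    ∑ a ∈ Icc 1 d, expChar (a / d * m) = if d ∣ m then (d : ℂ) else 0 := by
  rcases eq_or_ne d 0 with rfl | hd
  · simp
  have hsmul (a : ℕ) : (a / d * m : ℚ) = a • (m / d : ℚ) := by rw [nsmul_eq_mul]; ring
  have hpow : expChar (m / d) ^ d = 1 := by
    rw [← AddChar.map_nsmul_eq_pow, ← hsmul, div_self (by exact_mod_cast hd), one_mul]
    exact expChar_natCast m
  simp_rw [hsmul, AddChar.map_nsmul_eq_pow, sum_Icc_pow_eq_ite hpow, expChar_eq_one_iff,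
    exists_intCast_eq_natCast_div_iff hd]

lemma sum_divisors_filter_dvd_moebius {q : ℕ} (hq : q ≠ 0) (m : ℕ) :
    ∑ d ∈ q.divisors with d ∣ m, μ d = if Nat.gcd m q = 1 then 1 else 0 := by
  have hfilter : {d ∈ q.divisors | d ∣ m} = (Nat.gcd m q).divisors := by
    ext d
    simp only [mem_filter, Nat.mem_divisors, Nat.dvd_gcd_iff]
    exact ⟨fun ⟨⟨hdq, _⟩, hdm⟩ => ⟨⟨hdm, hdq⟩, (Nat.gcd_pos_of_pos_right m
      (Nat.pos_of_ne_zero hq)).ne'⟩, fun ⟨⟨hdm, hdq⟩, _⟩ => ⟨⟨hdq, hq⟩, hdm⟩⟩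
  rw [hfilter, ← coe_mul_zeta_apply, moebius_mul_coe_zeta, one_apply]

lemma sum_divisors_moebius_div {K : Type*} [Field K] [CharZero K] (n : ℕ) :
    ∑ d ∈ n.divisors, (μ d : K) / d = (n.totient : K) / n := by
  rcases eq_or_ne n 0 with rfl | hn
  · simp
  have hφ := (sum_eq_iff_sum_mul_moebius_eq (R := K) (f := fun d => (d.totient : K))
    (g := fun d => (d : K))).1 (fun k _ => by exact_mod_cast Nat.sum_totient k) n
    (Nat.pos_of_ne_zero hn)
  rw [← hφ, Nat.sum_divisorsAntidiagonal (fun d e => (μ d : K) * e), sum_div]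
  refine sum_congr rfl fun d hd => ?_
  have hd0 : (d : K) ≠ 0 := by exact_mod_cast (Nat.pos_of_mem_divisors hd).ne'
  rw [Nat.cast_div (Nat.dvd_of_mem_divisors hd) hd0]
  field_simp

lemma sum_divisors_filter_dvd_moebius_div {K : Type*} [Field K] [CharZero K] {q e : ℕ}
    (hq : Squarefree q) (he : e ∣ q) :
    ∑ d ∈ q.divisors with e ∣ d, (μ d : K) / d = (q.totient / q : K) * (μ e / e.totient) := by
  obtain ⟨c, rfl⟩ := he
  have hcop : Nat.Coprime e c := (Nat.squarefree_mul_iff.1 hq).1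
  have he0 : e ≠ 0 := left_ne_zero_of_mul hq.ne_zero
  have hc0 : c ≠ 0 := right_ne_zero_of_mul hq.ne_zero
  have hreindex : ∑ d ∈ (e * c).divisors with e ∣ d, (μ d : K) / d =
      ∑ f ∈ c.divisors, (μ (e * f) : K) / (e * f : ℕ) := by
    refine (sum_nbij' (e * ·) (· / e) ?_ ?_ ?_ ?_ fun _ _ => rfl).symm
    · intro f hf
      simp only [mem_filter, Nat.mem_divisors] at hf ⊢
      exact ⟨⟨mul_dvd_mul_left e hf.1, hq.ne_zero⟩, dvd_mul_right e f⟩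
    · intro d hd
      simp only [mem_filter, Nat.mem_divisors] at hd ⊢
      obtain ⟨⟨hdq, -⟩, f, rfl⟩ := hd
      rw [Nat.mul_div_cancel_left f (Nat.pos_of_ne_zero he0)]
      exact ⟨(mul_dvd_mul_iff_left he0).1 hdq, hc0⟩
    · intro f _
      exact Nat.mul_div_cancel_left f (Nat.pos_of_ne_zero he0)
    · intro d hd
      simp only [mem_filter] at hd
      exact Nat.mul_div_cancel' hd.2
  have hmul : ∀ f ∈ c.divisors, (μ (e * f) : K) / (e * f : ℕ) = μ e / e * (μ f / f) := by
    intro f hf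
    rw [isMultiplicative_moebius.map_mul_of_coprime
      (hcop.coprime_dvd_right (Nat.dvd_of_mem_divisors hf))]
    push_cast
    ring
  have hφe : (e.totient : K) ≠ 0 := by
    exact_mod_cast (Nat.totient_pos.2 (Nat.pos_of_ne_zero he0)).ne'
  have he0' : (e : K) ≠ 0 := by exact_mod_cast he0
  rw [hreindex, sum_congr rfl hmul, ← mul_sum, sum_divisors_moebius_div, Nat.totient_mul hcop]
  push_cast
  field_simp

lemma sum_Icc_filter_gcd_eq {M : Type*} [AddCommMonoid M] (F : ℚ → M) {d g : ℕ} (hg : g ∣ d) :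
    ∑ a ∈ Icc 1 d with Nat.gcd a d = g, F (a / d) =
      ∑ b ∈ Icc 1 (d / g) with Nat.gcd b (d / g) = 1, F (b / (d / g : ℕ)) := by
  rcases eq_or_ne d 0 with rfl | hd
  · simp
  obtain ⟨e, rfl⟩ := hg
  have hg0 : g ≠ 0 := left_ne_zero_of_mul hd
  have he0 : e ≠ 0 := right_ne_zero_of_mul hd
  rw [Nat.mul_div_cancel_left e (Nat.pos_of_ne_zero hg0)]
  refine sum_nbij' (· / g) (· * g) ?_ ?_ ?_ ?_ ?_
  · intro a ha
    simp only [mem_filter, mem_Icc] at ha ⊢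
    obtain ⟨⟨ha1, hae⟩, hgcd⟩ := ha
    obtain ⟨c, rfl⟩ : g ∣ a := hgcd ▸ Nat.gcd_dvd_left a (g * e)
    rw [Nat.gcd_mul_left, mul_eq_left₀ hg0] at hgcd
    rw [Nat.mul_div_cancel_left c (Nat.pos_of_ne_zero hg0)]
    exact ⟨⟨Nat.pos_of_ne_zero (right_ne_zero_of_mul (Nat.one_le_iff_ne_zero.1 ha1)),
      Nat.le_of_mul_le_mul_left hae (Nat.pos_of_ne_zero hg0)⟩, hgcd⟩
  · intro b hb
    simp only [mem_filter, mem_Icc] at hb ⊢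
    obtain ⟨⟨hb1, hbe⟩, hgcd⟩ := hb
    rw [mul_comm g e, Nat.gcd_mul_right, hgcd, one_mul]
    exact ⟨⟨Nat.mul_pos hb1 (Nat.pos_of_ne_zero hg0), Nat.mul_le_mul_right g hbe⟩, rfl⟩
  · intro a ha
    simp only [mem_filter] at ha
    exact Nat.div_mul_cancel (ha.2 ▸ Nat.gcd_dvd_left a (g * e))
  · intro b _
    exact Nat.mul_div_cancel b (Nat.pos_of_ne_zero hg0)
  · intro a ha
    simp only [mem_filter] at ha
    have hga : g ∣ a := ha.2 ▸ Nat.gcd_dvd_left a (g * e)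
    have hg0' : (g : ℚ) ≠ 0 := by exact_mod_cast hg0
    rw [Nat.cast_div hga hg0', Nat.cast_mul]
    field_simp

lemma sum_Icc_div_eq_sum_divisors {M : Type*} [AddCommMonoid M] (F : ℚ → M) (d : ℕ) :
    ∑ a ∈ Icc 1 d, F (a / d) =
      ∑ e ∈ d.divisors, ∑ b ∈ Icc 1 e with Nat.gcd b e = 1, F (b / e) := by
  rcases eq_or_ne d 0 with rfl | hd
  · simp
  rw [← sum_fiberwise_of_maps_to (g := fun a => Nat.gcd a d) (t := d.divisors)
    (fun a _ => Nat.mem_divisors.2 ⟨Nat.gcd_dvd_right a d, hd⟩), ← Nat.sum_div_divisors]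
  refine sum_congr rfl fun e he => ?_
  have hed : e ∣ d := Nat.dvd_of_mem_divisors he
  rw [sum_Icc_filter_gcd_eq F (Nat.div_dvd_of_dvd hed), Nat.div_div_self hed hd]

lemma coprime_indicator_eq_sum_divisors {q : ℕ} (hq : Squarefree q) (m : ℕ) :
    (if Nat.gcd m q = 1 then 1 else 0 : ℂ) = (q.totient / q : ℂ) *
      ∑ e ∈ q.divisors, μ e / e.totient *
        ∑ b ∈ Icc 1 e with Nat.gcd b e = 1, expChar (b / e * m) := by
  calc (if Nat.gcd m q = 1 then 1 else 0 : ℂ)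
      = ∑ d ∈ q.divisors with d ∣ m, (μ d : ℂ) := by
        rw [← Int.cast_sum, sum_divisors_filter_dvd_moebius hq.ne_zero]
        push_cast; rfl
    _ = ∑ d ∈ q.divisors, μ d / d * ∑ a ∈ Icc 1 d, expChar (a / d * m) := by
        rw [sum_filter]
        refine sum_congr rfl fun d hd => ?_
        have hd0 : (d : ℂ) ≠ 0 := by exact_mod_cast (Nat.pos_of_mem_divisors hd).ne'
        rw [sum_Icc_expChar_div_mul]
        split_ifs <;> simp [hd0]
    _ = ∑ d ∈ q.divisors, ∑ e ∈ d.divisors, μ d / d *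
          ∑ b ∈ Icc 1 e with Nat.gcd b e = 1, expChar (b / e * m) := by
        simp_rw [sum_Icc_div_eq_sum_divisors (fun x => expChar (x * m)), mul_sum]
    _ = ∑ e ∈ q.divisors, (∑ d ∈ q.divisors with e ∣ d, (μ d : ℂ) / d) *
          ∑ b ∈ Icc 1 e with Nat.gcd b e = 1, expChar (b / e * m) := by
        simp_rw [sum_mul]
        refine sum_comm' fun d e => ?_
        simp only [mem_filter, Nat.mem_divisors]
        exact ⟨fun ⟨⟨hdq, hq0⟩, hed, _⟩ => ⟨⟨⟨hdq, hq0⟩, hed⟩, hed.trans hdq, hq0⟩,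
          fun ⟨⟨⟨hdq, hq0⟩, hed⟩, _⟩ => ⟨⟨hdq, hq0⟩, hed, ne_zero_of_dvd_ne_zero hq0 hdq⟩⟩
    _ = _ := by
        rw [mul_sum]
        refine sum_congr rfl fun e he => ?_
        rw [sum_divisors_filter_dvd_moebius_div hq (Nat.dvd_of_mem_divisors he), mul_assoc]

lemma Efun_eq_sum_expChar (h : ℕ) (x : ℚ) : Efun h x = ∑ j ∈ Icc 1 h, expChar (x * j) := by
  refine sum_congr rfl fun j _ => ?_
  rw [expChar_apply]
  push_cast
  ring_nf

lemma sum_Ico_expChar_mul (x : ℚ) (n h : ℕ) :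
    ∑ m ∈ Ico n (n + h), expChar (x * m) = expChar (x * (n - 1)) * Efun h x := by
  rw [sum_Ico_eq_sum_range, Efun_eq_sum_expChar, sum_Icc_one_eq_sum_range, mul_sum,
    Nat.add_sub_cancel_left]
  refine sum_congr rfl fun j _ => ?_
  rw [← AddChar.map_add_eq_mul]
  push_cast
  ring_nf

lemma Efun_one (h : ℕ) : Efun h 1 = h := by
  simp [Efun_eq_sum_expChar, expChar_natCast]

noncomputable def coprimeCountTerm (h n e : ℕ) : ℂ :=
  μ e / e.totient *
    ∑ b ∈ Icc 1 e with Nat.gcd b e = 1, expChar (b / e * (n - 1)) * Efun h (b / e)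

lemma coprimeCountTerm_one (h n : ℕ) : coprimeCountTerm h n 1 = h := by
  have hn : expChar ((n : ℚ) - 1) = 1 := by exact_mod_cast expChar_intCast (n - 1)
  simp [coprimeCountTerm, Efun_one, hn]

lemma card_filter_coprime_Ico {q : ℕ} (hq : Squarefree q) (n h : ℕ) :
    (#{m ∈ Ico n (n + h) | Nat.gcd m q = 1} : ℂ) =
      (q.totient / q : ℂ) * ∑ e ∈ q.divisors, coprimeCountTerm h n e := by
  rw [natCast_card_filter, sum_congr rfl fun m _ => coprime_indicator_eq_sum_divisors hq m,
    ← mul_sum, sum_comm]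
  simp_rw [← mul_sum, coprimeCountTerm]
  refine congrArg _ (sum_congr rfl fun e _ => congrArg _ ?_)
  rw [sum_comm]
  exact sum_congr rfl fun b _ => sum_Ico_expChar_mul _ n h

lemma prod_coprimeCountTerm {k : ℕ} (h n : ℕ) (qs : Fin k → ℕ) :
    ∏ i, coprimeCountTerm h n (qs i) = (∏ i, (μ (qs i) : ℂ) / (qs i).totient) *
      ∑ a ∈ Fintype.piFinset (fun i => {b ∈ Icc 1 (qs i) | Nat.gcd b (qs i) = 1}),
        expChar ((∑ i, (a i : ℚ) / qs i) * (n - 1)) * ∏ i, Efun h (a i / qs i) := by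
  simp_rw [coprimeCountTerm, prod_mul_distrib, prod_univ_sum, prod_mul_distrib,
    ← expChar_sum, sum_mul]

lemma sum_Icc_expChar_mul_sub_one {q : ℕ} {x : ℚ} (hx : ∃ z : ℤ, q * x = z) :
    ∑ n ∈ Icc 1 q, expChar (x * (n - 1)) = if ∃ z : ℤ, x = z then (q : ℂ) else 0 := by
  simp_rw [sum_Icc_one_eq_sum_range, Nat.cast_add_one, add_sub_cancel_right, mul_comm x]
  exact sum_range_expChar_mul hx

lemma sum_Icc_prod_coprimeCountTerm {q k : ℕ} (h : ℕ) (qs : Fin k → ℕ)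
    (hqs : ∀ i, qs i ∈ q.divisors) :
    ∑ n ∈ Icc 1 q, ∏ i, coprimeCountTerm h n (qs i) =
      q * ((∏ i, (μ (qs i) : ℂ) / (qs i).totient) *
        ∑ a ∈ (Fintype.piFinset fun i => Icc 1 (qs i)) with
          (∀ i, Nat.gcd (a i) (qs i) = 1) ∧ ∃ z : ℤ, ∑ i, (a i : ℚ) / qs i = z,
          ∏ i, Efun h (a i / qs i)) := by
  have hint (a : Fin k → ℕ) : ∃ z : ℤ, q * ∑ i, (a i : ℚ) / qs i = z := by
    refine ⟨∑ i, a i * (q / qs i : ℕ), ?_⟩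
    rw [mul_sum, Int.cast_sum]
    refine sum_congr rfl fun i _ => ?_
    have hqi : (qs i : ℚ) ≠ 0 := by exact_mod_cast (Nat.pos_of_mem_divisors (hqs i)).ne'
    rw [Int.cast_mul, Int.cast_natCast, Int.cast_natCast,
      Nat.cast_div (Nat.dvd_of_mem_divisors (hqs i)) hqi]
    ring
  have hpi : {a ∈ Fintype.piFinset (fun i => Icc 1 (qs i)) | ∀ i, Nat.gcd (a i) (qs i) = 1} =
      Fintype.piFinset (fun i => {b ∈ Icc 1 (qs i) | Nat.gcd b (qs i) = 1}) := by
    ext a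
    simp only [mem_filter, Fintype.mem_piFinset, forall_and]
  simp_rw [prod_coprimeCountTerm, ← mul_sum]
  rw [mul_left_comm, sum_comm]
  simp_rw [← sum_mul, sum_Icc_expChar_mul_sub_one (hint _), ite_mul, zero_mul, ← sum_filter,
    ← filter_filter, hpi, mul_sum]

theorem Mkk_eq_Vkk_general (q h k₁ k₂ : ℕ) (hq : Squarefree q) :
    (Mkk q h k₁ k₂ : ℂ) =
      (q : ℂ) * ((Nat.totient q : ℂ) / (q : ℂ)) ^ (k₁ + k₂) * Vkk q h k₁ k₂ := by
  set ρ : ℂ := q.totient / q with hρ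
  have hterm (n : ℕ) :
      ((#{m ∈ Ico n (n + h) | Nat.gcd m q = 1} : ℂ) - ρ * h) ^ k₁ *
        (#{m ∈ Ico n (n + h) | Nat.gcd m q = 1} : ℂ) ^ k₂ =
      ρ ^ (k₁ + k₂) * ∑ qs ∈ Fintype.piFinset (fun _ : Fin (k₁ + k₂) => q.divisors) with
        ∀ i : Fin (k₁ + k₂), (i : ℕ) < k₁ → 1 < qs i, ∏ i, coprimeCountTerm h n (qs i) := by
    rw [← sum_filter_pow_mul_sum_pow, card_filter_coprime_Ico hq,
      sum_divisors_eq_sum_filter_one_lt_add hq.ne_zero, coprimeCountTerm_one, ← hρ,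
      mul_add ρ, add_sub_cancel_right, ← mul_add, mul_pow, mul_pow, pow_add]
    ring
  calc (Mkk q h k₁ k₂ : ℂ)
      = ∑ n ∈ Icc 1 q, ρ ^ (k₁ + k₂) * ∑ qs ∈ Fintype.piFinset (fun _ : Fin (k₁ + k₂) =>
          q.divisors) with ∀ i : Fin (k₁ + k₂), (i : ℕ) < k₁ → 1 < qs i,
            ∏ i, coprimeCountTerm h n (qs i) := by
        rw [Mkk]
        push_cast
        exact sum_congr rfl fun n _ => hterm n
    _ = _ := by
      rw [← mul_sum, sum_comm, Vkk, mul_sum, mul_sum]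
      refine sum_congr rfl fun qs hqs => ?_
      rw [sum_Icc_prod_coprimeCountTerm h qs fun i => Fintype.mem_piFinset.1 (mem_filter.1 hqs).1 i]
      ring

theorem Mkk_eq_Vkk (q h k₁ k₂ : ℕ) (hq : Squarefree q) (hq0 : 0 < q) (hh : 1 ≤ h) :
    (Mkk q h k₁ k₂ : ℂ) =
      (q : ℂ) * ((Nat.totient q : ℂ) / (q : ℂ)) ^ (k₁ + k₂) * Vkk q h k₁ k₂ :=
  Mkk_eq_Vkk_general q h k₁ k₂ hq
end

section
/- Let k ≥ 1 be an integer and let d_1,...,d_k be integers, D = (d_1,...,d_k). Then Σ_𝒫 w(𝒫)·Δ_𝒫(D), where the sum is over all set partitions 𝒫 of {1,...,k}, equals 1 if d_1,...,d_k are pairwise distinct and equals 0 otherwise. -/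
open scoped Classical

/-- `wP P = ∑_G (−1)^{e(G)}`, the sum being over all simple graphs `G` on
`{1,…,k}` whose connected components have vertex sets exactly the cells
of the partition `P`, where `e(G)` is the number of edges of `G`. -/
noncomputable def wP {k : ℕ} (P : Finpartition (Finset.univ : Finset (Fin k))) : ℤ :=
  ∑ G ∈ (Finset.univ : Finset (SimpleGraph (Fin k))).filter
      (fun G => ∀ i j : Fin k, G.Reachable i j ↔ ∃ S ∈ P.parts, i ∈ S ∧ j ∈ S),
    (-1 : ℤ) ^ G.edgeSet.ncard

/-!
Expanding `wP`, the sum becomes `∑_G (-1)^{e(G)}` over the graphs `G` on whose connected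
components `d` is constant, i.e. over the subgraphs of the graph `H` joining distinct vertices
with equal labels. Subgraphs of `H` correspond to subsets of its edge set, so this alternating sum
is `1` if `H` has no edges, i.e. if `d` is injective, and `0` otherwise.
-/

open Finset

namespace Finpartition

variable {α : Type*} [DecidableEq α] {s : Finset α}

lemma parts_eq_image_part (P : Finpartition s) : P.parts = s.image P.part := by
  ext t
  refine ⟨fun ht => ?_, fun ht => ?_⟩
  · obtain ⟨a, ha⟩ := P.nonempty_of_mem_parts ht
    exact mem_image.2 ⟨a, P.le ht ha, P.part_eq_of_mem ht ha⟩
  · obtain ⟨a, ha, rfl⟩ := mem_image.1 ht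
    exact P.part_mem.2 ha

lemma ext_of_mem_part_iff {P Q : Finpartition s} (h : ∀ a b, a ∈ P.part b ↔ a ∈ Q.part b) :
    P = Q := by
  have hpart : P.part = Q.part := funext fun b => Finset.ext fun a => h a b
  exact Finpartition.ext (by rw [parts_eq_image_part P, parts_eq_image_part Q, hpart])

end Finpartition

namespace SimpleGraph

variable {V : Type*}

lemma Reachable.apply_eq_of_forall_adj {β : Type*} {G : SimpleGraph V} {f : V → β}
    (hf : ∀ a b, G.Adj a b → f a = f b) {a b : V} (hab : G.Reachable a b) : f a = f b := by
  obtain ⟨w⟩ := hab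
  induction w with
  | nil => rfl
  | cons hadj _ ih => exact (hf _ _ hadj).trans ih

lemma le_fromRel_apply_eq_iff {β : Type*} {G : SimpleGraph V} {f : V → β} :
    G ≤ fromRel (fun a b => f a = f b) ↔ ∀ a b, G.Adj a b → f a = f b := by
  refine ⟨fun h a b hab => ?_, fun h a b hab => ⟨hab.ne, Or.inl (h a b hab)⟩⟩
  rcases (h hab).2 with hf | hf
  exacts [hf, hf.symm]

lemma fromRel_eq_bot_iff {r : V → V → Prop} : fromRel r = ⊥ ↔ ∀ a b, r a b → a = b := by
  refine ⟨fun h a b hab => ?_, fun h => ?_⟩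
  · by_contra hne
    exact (h ▸ (fromRel_adj r a b).2 ⟨hne, Or.inl hab⟩ : (⊥ : SimpleGraph V).Adj a b)
  · ext a b
    simp only [fromRel_adj, bot_adj, iff_false, not_and]
    rintro hne (hab | hba)
    exacts [hne (h a b hab), hne (h b a hba).symm]

variable [Fintype V] [DecidableEq V]

noncomputable def componentFinpartition (G : SimpleGraph V) : Finpartition (univ : Finset V) :=
  Finpartition.ofSetoid G.reachableSetoid

lemma mem_componentFinpartition_part {G : SimpleGraph V} {a b : V} :
    b ∈ G.componentFinpartition.part a ↔ G.Reachable a b :=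
  Finpartition.mem_part_ofSetoid_iff_rel

lemma forall_reachable_iff_eq_componentFinpartition (G : SimpleGraph V)
    (P : Finpartition (univ : Finset V)) :
    (∀ a b, G.Reachable a b ↔ ∃ S ∈ P.parts, a ∈ S ∧ b ∈ S) ↔ G.componentFinpartition = P := by
  simp only [← Finpartition.mem_part_iff_exists]
  refine ⟨fun h => Finpartition.ext_of_mem_part_iff fun a b => ?_, ?_⟩
  · rw [mem_componentFinpartition_part, reachable_comm, h]
  · rintro rfl a b
    rw [mem_componentFinpartition_part, reachable_comm]

lemma forall_mem_parts_componentFinpartition_iff {β : Type*} (G : SimpleGraph V) (f : V → β) :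
    (∀ S ∈ G.componentFinpartition.parts, ∀ a ∈ S, ∀ b ∈ S, f a = f b) ↔
      ∀ a b, G.Adj a b → f a = f b := by
  refine ⟨fun h a b hab => ?_, fun h S hS a ha b hb => ?_⟩
  · exact h _ (G.componentFinpartition.part_mem.2 (mem_univ a)) a
      (G.componentFinpartition.mem_part (mem_univ a)) b
      (mem_componentFinpartition_part.2 hab.reachable)
  · have hab : b ∈ G.componentFinpartition.part a := by
      rw [G.componentFinpartition.part_eq_of_mem hS ha]; exact hb
    exact (mem_componentFinpartition_part.1 hab).apply_eq_of_forall_adj h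

lemma sum_le_eq_sum_powerset_edgeFinset {M : Type*} [AddCommMonoid M] (H : SimpleGraph V)
    (f : ℕ → M) : ∑ G with G ≤ H, f G.edgeSet.ncard = ∑ E ∈ H.edgeFinset.powerset, f #E := by
  have hsub : ∀ E ∈ H.edgeFinset.powerset, (E : Set (Sym2 V)) ⊆ H.edgeSet := fun E hE =>
    coe_edgeFinset H ▸ coe_subset.2 (mem_powerset.1 hE)
  refine sum_nbij' (fun G => G.edgeFinset) (fun E => fromEdgeSet ↑E) ?_ ?_ ?_ ?_ ?_
  · intro G hG
    exact mem_powerset.2 (edgeFinset_mono (mem_filter.1 hG).2)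
  · intro E hE
    exact mem_filter.2 ⟨mem_univ _, (fromEdgeSet_le H).2 fun e he => hsub E hE he.1⟩
  · intro G _
    simp only [coe_edgeFinset, fromEdgeSet_edgeSet]
  · intro E hE
    apply coe_injective
    rw [coe_edgeFinset, edgeSet_fromEdgeSet, sdiff_eq_left]
    exact Set.subset_compl_iff_disjoint_right.1 ((hsub E hE).trans H.edgeSet_subset_compl_diagSet)
  · intro G _
    simp only [← coe_edgeFinset, Set.ncard_coe_finset]

lemma sum_le_neg_one_pow_ncard_edgeSet (H : SimpleGraph V) :
    ∑ G with G ≤ H, (-1 : ℤ) ^ G.edgeSet.ncard = if H = ⊥ then 1 else 0 := by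
  rw [sum_le_eq_sum_powerset_edgeFinset H (fun n => (-1 : ℤ) ^ n), sum_powerset_neg_one_pow_card]
  simp only [edgeFinset_eq_empty]

end SimpleGraph

open SimpleGraph in
lemma sum_wP_mul {k : ℕ} (f : Finpartition (univ : Finset (Fin k)) → ℤ) :
    ∑ P, wP P * f P =
      ∑ G : SimpleGraph (Fin k), (-1 : ℤ) ^ G.edgeSet.ncard * f G.componentFinpartition := by
  rw [← sum_fiberwise univ componentFinpartition]
  refine sum_congr rfl fun P _ => ?_
  simp only [wP, forall_reachable_iff_eq_componentFinpartition, sum_mul]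
  exact sum_congr rfl fun G hG => by rw [(mem_filter.1 hG).2]

theorem sum_wP_indicator_general (k : ℕ) (d : Fin k → ℤ) :
    ∑ P : Finpartition (Finset.univ : Finset (Fin k)),
      (wP P : ℤ) * (if ∀ S ∈ P.parts, ∀ i ∈ S, ∀ j ∈ S, d i = d j then 1 else 0)
    = if Function.Injective d then 1 else 0 := by
  rw [sum_wP_mul]
  simp only [SimpleGraph.forall_mem_parts_componentFinpartition_iff,
    ← SimpleGraph.le_fromRel_apply_eq_iff, mul_ite, mul_one, mul_zero, ← sum_filter,
    SimpleGraph.sum_le_neg_one_pow_ncard_edgeSet]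
  exact if_congr SimpleGraph.fromRel_eq_bot_iff rfl rfl

theorem sum_wP_indicator (k : ℕ) (hk : 1 ≤ k) (d : Fin k → ℤ) :
    ∑ P : Finpartition (Finset.univ : Finset (Fin k)),
      (wP P : ℤ) * (if ∀ S ∈ P.parts, ∀ i ∈ S, ∀ j ∈ S, d i = d j then 1 else 0)
    = if Function.Injective d then 1 else 0 :=
  sum_wP_indicator_general k d
end

section
/- There exists a constant c > 0 such that for all integers n, Q with 1 ≤ n ≤ Q, the number of 6-tuples (a_1,a_2,a_3,q_1,q_2,q_3) of integers with |a_i| ≤ n, 1 ≤ q_i ≤ Q and gcd(a_i,q_i) = 1 for i = 1,2,3, and a_1/q_1 + a_2/q_2 + a_3/q_3 = 0, is at least c·n²·Q. -/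
/-!
For `q ≤ Q` and `a₁, a₂ ∈ [1, n]` prime to `q`, the identity `a₁/q - a₂/q + (a₂ - a₁)/q = 0`,
with the last fraction put in lowest terms, is a solution, and distinct triples `(q, a₁, a₂)` give
distinct solutions. Hence the count is at least `∑_{q ≤ Q} φₙ(q)²`, where `φₙ(q)` is the number of
`a ∈ [1, n]` prime to `q`. A pair `(a, q)` is not coprime only if some `k ≥ 2` divides both, so
`∑_q φₙ(q) ≥ nQ (1 - ∑_{k ≥ 2} k⁻²) = (2 - π²/6) nQ`, and Cauchy–Schwarz gives
`∑_q φₙ(q)² ≥ (2 - π²/6)² n²Q`.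
-/

open Finset Real

lemma pi_sq_div_six_lt_two : π ^ 2 / 6 < 2 := by
  nlinarith [pi_pos, pi_lt_d2]

lemma sum_Icc_two_one_div_sq_le (N : ℕ) : ∑ k ∈ Icc 2 N, 1 / (k : ℝ) ^ 2 ≤ π ^ 2 / 6 - 1 := by
  have h := sum_le_hasSum (insert 1 (Icc 2 N)) (fun _ _ => by positivity) hasSum_zeta_two
  rw [sum_insert (by simp), Nat.cast_one, one_pow, div_one] at h
  linarith

lemma card_filter_dvd_Icc_one (N k : ℕ) : #{a ∈ Icc 1 N | k ∣ a} = N / k :=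
  Nat.Ioc_filter_dvd_card_eq_div N k

lemma card_filter_not_coprime_le (N Q : ℕ) :
    #{p ∈ Icc 1 N ×ˢ Icc 1 Q | ¬ p.1.Coprime p.2} ≤ ∑ k ∈ Icc 2 N, (N / k) * (Q / k) := by
  calc #{p ∈ Icc 1 N ×ˢ Icc 1 Q | ¬ p.1.Coprime p.2}
      ≤ #((Icc 2 N).biUnion fun k => {a ∈ Icc 1 N | k ∣ a} ×ˢ {q ∈ Icc 1 Q | k ∣ q}) := by
        refine card_le_card fun p hp => ?_
        simp only [mem_filter, mem_product, mem_Icc] at hp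
        obtain ⟨⟨⟨ha, haN⟩, hq, hqQ⟩, hpq⟩ := hp
        have hgcd_pos : 0 < p.1.gcd p.2 := Nat.gcd_pos_of_pos_left _ ha
        have hgcd_le : p.1.gcd p.2 ≤ p.1 := Nat.le_of_dvd ha (Nat.gcd_dvd_left _ _)
        have hgcd_ne : p.1.gcd p.2 ≠ 1 := hpq
        simp only [mem_biUnion, mem_product, mem_filter, mem_Icc]
        exact ⟨p.1.gcd p.2, ⟨by omega, by omega⟩,
          ⟨⟨ha, haN⟩, Nat.gcd_dvd_left _ _⟩, ⟨hq, hqQ⟩, Nat.gcd_dvd_right _ _⟩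
    _ ≤ ∑ k ∈ Icc 2 N, #({a ∈ Icc 1 N | k ∣ a} ×ˢ {q ∈ Icc 1 Q | k ∣ q}) := card_biUnion_le
    _ = ∑ k ∈ Icc 2 N, (N / k) * (Q / k) := by
        simp only [card_product, card_filter_dvd_Icc_one]

lemma card_filter_coprime_ge (N Q : ℕ) :
    (2 - π ^ 2 / 6) * N * Q ≤ (#{p ∈ Icc 1 N ×ˢ Icc 1 Q | p.1.Coprime p.2} : ℝ) := by
  have hsplit : (#{p ∈ Icc 1 N ×ˢ Icc 1 Q | p.1.Coprime p.2} : ℝ)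
      + #{p ∈ Icc 1 N ×ˢ Icc 1 Q | ¬ p.1.Coprime p.2} = N * Q := by
    exact_mod_cast (card_filter_add_card_filter_not _).trans (by simp)
  have hbad : (#{p ∈ Icc 1 N ×ˢ Icc 1 Q | ¬ p.1.Coprime p.2} : ℝ)
      ≤ N * Q * (π ^ 2 / 6 - 1) :=
    calc (#{p ∈ Icc 1 N ×ˢ Icc 1 Q | ¬ p.1.Coprime p.2} : ℝ)
        ≤ ∑ k ∈ Icc 2 N, ((N / k : ℕ) : ℝ) * ((Q / k : ℕ) : ℝ) := by
          exact_mod_cast card_filter_not_coprime_le N Q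
      _ ≤ ∑ k ∈ Icc 2 N, (N / k : ℝ) * (Q / k) :=
          sum_le_sum fun k _ => mul_le_mul Nat.cast_div_le Nat.cast_div_le (by positivity)
            (by positivity)
      _ = N * Q * ∑ k ∈ Icc 2 N, 1 / (k : ℝ) ^ 2 := by
          rw [mul_sum]
          exact sum_congr rfl fun k _ => by ring
      _ ≤ N * Q * (π ^ 2 / 6 - 1) := by
          gcongr
          exact sum_Icc_two_one_div_sq_le N
  linarith

def coprimesIn (N q : ℕ) : Finset ℕ := {a ∈ Icc 1 N | a.Coprime q}

lemma sum_card_coprimesIn (N Q : ℕ) :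
    ∑ q ∈ Icc 1 Q, #(coprimesIn N q) = #{p ∈ Icc 1 N ×ˢ Icc 1 Q | p.1.Coprime p.2} := by
  simp only [coprimesIn, card_filter, sum_product_right]

lemma sum_sq_card_coprimesIn_ge (N Q : ℕ) :
    (2 - π ^ 2 / 6) ^ 2 * N ^ 2 * Q ≤ ∑ q ∈ Icc 1 Q, (#(coprimesIn N q) : ℝ) ^ 2 := by
  have hlin : (2 - π ^ 2 / 6) * N * Q ≤ ∑ q ∈ Icc 1 Q, (#(coprimesIn N q) : ℝ) := by
    exact_mod_cast (sum_card_coprimesIn N Q).symm ▸ card_filter_coprime_ge N Q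
  have hcs := sq_sum_le_card_mul_sum_sq (s := Icc 1 Q) (f := fun q => (#(coprimesIn N q) : ℝ))
  rw [Nat.card_Icc, Nat.add_sub_cancel] at hcs
  have hδ : 0 ≤ (2 - π ^ 2 / 6) * N * Q := by
    have := sub_nonneg.2 pi_sq_div_six_lt_two.le
    positivity
  rcases Nat.eq_zero_or_pos Q with rfl | hQ
  · simp
  · have hQ' : (0 : ℝ) < Q := by exact_mod_cast hQ
    have := (pow_le_pow_left₀ hδ hlin 2).trans hcs
    nlinarith

lemma Rat.natAbs_num_divInt_le (m d : ℤ) : (Rat.divInt m d).num.natAbs ≤ m.natAbs := by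
  rcases eq_or_ne m 0 with rfl | hm
  · simp
  rcases eq_or_ne d 0 with rfl | hd
  · simp
  exact Int.natAbs_le_of_dvd_ne_zero (Rat.num_dvd m hd) hm

lemma Rat.den_divInt_le (m : ℤ) {d : ℕ} (hd : 0 < d) : (Rat.divInt m d).den ≤ d :=
  Nat.le_of_dvd hd (Int.natCast_dvd_natCast.1 (Rat.den_dvd m d))

def threeFractionSolutions (n Q : ℤ) : Set ((Fin 3 → ℤ) × (Fin 3 → ℤ)) :=
  {aq | (∀ i, |aq.1 i| ≤ n ∧ 1 ≤ aq.2 i ∧ aq.2 i ≤ Q ∧ Int.gcd (aq.1 i) (aq.2 i) = 1) ∧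
    ∑ i, (aq.1 i : ℚ) / (aq.2 i : ℚ) = 0}

lemma threeFractionSolutions_finite (n Q : ℤ) : (threeFractionSolutions n Q).Finite := by
  refine ((Set.Finite.pi' fun _ => Set.finite_Icc (-n) n).prod
    (Set.Finite.pi' fun _ => Set.finite_Icc 1 Q)).subset ?_
  rintro ⟨a, q⟩ ⟨h, -⟩
  exact ⟨fun i => abs_le.1 (h i).1, fun i => ⟨(h i).2.1, (h i).2.2.1⟩⟩

/-- The solution `a₁/q + (-a₂)/q + (a₂ - a₁)/q = 0`, the last fraction in lowest terms. -/
def fractionTriple (q a₁ a₂ : ℕ) : (Fin 3 → ℤ) × (Fin 3 → ℤ) :=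
  (![a₁, -a₂, (Rat.divInt (a₂ - a₁) q).num], ![q, q, (Rat.divInt (a₂ - a₁) q).den])

lemma fractionTriple_mem {N Q q a₁ a₂ : ℕ} (hq : q ∈ Icc 1 Q) (h₁ : a₁ ∈ coprimesIn N q)
    (h₂ : a₂ ∈ coprimesIn N q) : fractionTriple q a₁ a₂ ∈ threeFractionSolutions N Q := by
  simp only [coprimesIn, mem_filter, mem_Icc] at hq h₁ h₂
  obtain ⟨⟨ha₁, ha₁N⟩, hcop₁⟩ := h₁
  obtain ⟨⟨ha₂, ha₂N⟩, hcop₂⟩ := h₂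
  unfold fractionTriple
  set r := Rat.divInt (a₂ - a₁) q with hr
  have hr_num : |r.num| ≤ N := by
    have : r.num.natAbs ≤ ((a₂ : ℤ) - a₁).natAbs := Rat.natAbs_num_divInt_le _ _
    rw [Int.abs_eq_natAbs]
    omega
  have hr_den : r.den ≤ q := Rat.den_divInt_le _ (by omega)
  refine ⟨fun i => ?_, ?_⟩
  · fin_cases i <;> simp only [Fin.zero_eta, Fin.mk_one, Fin.reduceFinMk, Matrix.cons_val]
    · exact ⟨by simpa using ha₁N, by omega, by omega, hcop₁⟩
    · exact ⟨by simpa using ha₂N, by omega, by omega, by simpa using hcop₂⟩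
    · exact ⟨hr_num, by exact_mod_cast r.den_pos, by omega, r.reduced⟩
  · have hq0 : (q : ℚ) ≠ 0 := by exact_mod_cast (by omega : q ≠ 0)
    simp only [Fin.sum_univ_three, Matrix.cons_val, Int.cast_natCast, Rat.num_div_den, hr,
      Rat.divInt_eq_div]
    push_cast
    field_simp
    ring

lemma fractionTriple_injective :
    Function.Injective fun x : (Σ _ : ℕ, ℕ × ℕ) => fractionTriple x.1 x.2.1 x.2.2 := by
  rintro ⟨q, a₁, a₂⟩ ⟨q', b₁, b₂⟩ h
  simp only [fractionTriple, Prod.mk.injEq] at h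
  have hq : q = q' := by simpa using congrFun h.2 0
  have ha₁ : a₁ = b₁ := by simpa using congrFun h.1 0
  have ha₂ : a₂ = b₂ := by simpa using congrFun h.1 1
  subst hq ha₁ ha₂
  rfl

lemma sum_sq_card_coprimesIn_le_ncard (N Q : ℕ) :
    ∑ q ∈ Icc 1 Q, #(coprimesIn N q) ^ 2 ≤ (threeFractionSolutions N Q).ncard := by
  have hcard : #((Icc 1 Q).sigma fun q => coprimesIn N q ×ˢ coprimesIn N q)
      = ∑ q ∈ Icc 1 Q, #(coprimesIn N q) ^ 2 := by
    simp only [card_sigma, card_product, sq]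
  rw [← hcard, ← Set.ncard_coe_finset]
  refine Set.ncard_le_ncard_of_injOn _ (fun x hx => ?_) fractionTriple_injective.injOn
    (threeFractionSolutions_finite _ _)
  simp only [coe_sigma, Set.mem_sigma_iff, mem_coe, mem_product] at hx
  exact fractionTriple_mem hx.1 hx.2.1 hx.2.2

theorem lower_bound_three_fractions :
    ∃ c : ℝ, 0 < c ∧ ∀ n Q : ℤ, 1 ≤ n → n ≤ Q →
      c * (n : ℝ) ^ 2 * (Q : ℝ) ≤
        (Set.ncard {aq : (Fin 3 → ℤ) × (Fin 3 → ℤ) |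
          (∀ i, |aq.1 i| ≤ n ∧ 1 ≤ aq.2 i ∧ aq.2 i ≤ Q ∧ Int.gcd (aq.1 i) (aq.2 i) = 1) ∧
          ∑ i, (aq.1 i : ℚ) / (aq.2 i : ℚ) = 0} : ℝ) := by
  refine ⟨(2 - π ^ 2 / 6) ^ 2, pow_pos (sub_pos.2 pi_sq_div_six_lt_two) 2, fun n Q hn hnQ => ?_⟩
  change _ ≤ ((threeFractionSolutions n Q).ncard : ℝ)
  lift n to ℕ using by omega
  lift Q to ℕ using by omega
  calc (2 - π ^ 2 / 6) ^ 2 * ((n : ℤ) : ℝ) ^ 2 * ((Q : ℤ) : ℝ)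
      ≤ ∑ q ∈ Icc 1 Q, (#(coprimesIn n q) : ℝ) ^ 2 := by
        exact_mod_cast sum_sq_card_coprimesIn_ge n Q
    _ ≤ (threeFractionSolutions n Q).ncard := by
        exact_mod_cast sum_sq_card_coprimesIn_le_ncard n Q
end
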